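/- arXiv:2009.02116 — 7 statements merged into one kernel-verified Lean document; each statement's English description precedes it below -/
import Mathlib

section
/- Let 0 < γ < α and let μ be a Borel measure on [-1, 1] with μ({0}) = 0 such that sup_{r ∈ (0,1)} r^α · μ({x : r < |x| ≤ 1}) ≤ c. Then for every r ∈ (0,1], ∫_{r < |x| ≤ 1} |x|^γ dμ(x) ≤ (c · 2^{2α - γ} / (2^{α - γ} - 1)) · r^{γ - α}. -/
/-!
Cut `{r < |x| ≤ 1}` into the dyadic shells `2ᵏ r < |x| ≤ 2ᵏ⁺¹ r`. On the `k`-th shell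
`|x|^γ ≤ (2ᵏ⁺¹ r)^γ`, while the tail bound gives it mass at most `c (2ᵏ r)^(-α)`, so the shell
contributes at most `c 2^γ r^(γ-α) q^k` with `q = 2^(γ-α) < 1`. Summing the geometric series gives
the constant `c 2^α / (2^(α-γ) - 1)`, which is at most the stated one.
-/

open MeasureTheory Set

lemma exists_pow_lt_le_pow_succ {a t : ℝ} (ha : 1 < a) (ht : 1 < t) :
    ∃ k : ℕ, a ^ k < t ∧ t ≤ a ^ (k + 1) := by
  obtain ⟨n, hn_lt, hn_le⟩ := exists_mem_Ioc_zpow (zero_lt_one.trans ht) ha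
  have hn : 0 ≤ n := by
    by_contra! hn
    linarith [zpow_le_one_of_nonpos₀ ha.le (show n + 1 ≤ 0 by omega)]
  lift n to ℕ using hn
  exact ⟨n, by exact_mod_cast hn_lt, by exact_mod_cast hn_le⟩

lemma Ioi_subset_iUnion_Ioc_two_pow_mul {r : ℝ} (hr : 0 < r) :
    Ioi r ⊆ ⋃ k : ℕ, Ioc (2 ^ k * r) (2 ^ (k + 1) * r) := by
  intro t ht
  obtain ⟨k, hk_lt, hk_le⟩ := exists_pow_lt_le_pow_succ one_lt_two ((one_lt_div hr).2 ht)
  exact mem_iUnion.2 ⟨k, (lt_div_iff₀ hr).1 hk_lt, (div_le_iff₀ hr).1 hk_le⟩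

lemma two_pow_succ_mul_rpow_mul_rpow_neg {r : ℝ} (hr : 0 < r) (α γ C : ℝ) (k : ℕ) :
    (2 ^ (k + 1) * r) ^ γ * (C * (2 ^ k * r) ^ (-α)) =
      C * 2 ^ γ * r ^ (γ - α) * ((2 : ℝ) ^ (γ - α)) ^ k := by
  have hu : 0 < (2 : ℝ) ^ k * r := by positivity
  have h_pow : ((2 : ℝ) ^ k) ^ (γ - α) = ((2 : ℝ) ^ (γ - α)) ^ k := by
    rw [← Real.rpow_natCast_mul zero_le_two, mul_comm, Real.rpow_mul_natCast zero_le_two]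
  calc (2 ^ (k + 1) * r) ^ γ * (C * (2 ^ k * r) ^ (-α))
      = C * 2 ^ γ * ((2 ^ k * r) ^ γ * (2 ^ k * r) ^ (-α)) := by
        rw [pow_succ, mul_comm ((2 : ℝ) ^ k) 2, mul_assoc, Real.mul_rpow zero_le_two hu.le]
        ring
    _ = C * 2 ^ γ * r ^ (γ - α) * ((2 : ℝ) ^ (γ - α)) ^ k := by
        rw [← Real.rpow_add hu, ← sub_eq_add_neg, Real.mul_rpow (by positivity) hr.le, h_pow]
        ring

lemma two_rpow_mul_inv_one_sub_two_rpow_sub {α γ : ℝ} (hγα : γ < α) :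
    (2 : ℝ) ^ γ * (1 - 2 ^ (γ - α))⁻¹ = 2 ^ α / (2 ^ (α - γ) - 1) := by
  have hp : (1 : ℝ) < 2 ^ (α - γ) := Real.one_lt_rpow one_lt_two (by linarith)
  have hq : (2 : ℝ) ^ (γ - α) = (2 ^ (α - γ))⁻¹ := by
    rw [← Real.rpow_neg zero_le_two, neg_sub]
  have hα : (2 : ℝ) ^ α = 2 ^ γ * 2 ^ (α - γ) := by
    rw [← Real.rpow_add two_pos, add_sub_cancel]
  rw [hq, hα]
  field_simp [(sub_pos.2 hp).ne']

lemma ENNReal.le_ofReal_mul_rpow_neg_of_ofReal_rpow_mul_le {m : ENNReal} {t α C : ℝ}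
    (ht : 0 < t) (h : ENNReal.ofReal (t ^ α) * m ≤ ENNReal.ofReal C) :
    m ≤ ENNReal.ofReal (C * t ^ (-α)) := by
  have htα : 0 < t ^ α := Real.rpow_pos_of_pos ht α
  rw [Real.rpow_neg ht.le, ← div_eq_mul_inv, ENNReal.ofReal_div_of_pos htα,
    ENNReal.le_div_iff_mul_le (Or.inl (ENNReal.ofReal_pos.2 htα).ne')
      (Or.inl ENNReal.ofReal_ne_top), mul_comm]
  exact h

section DyadicShells

variable {Ω : Type*} [MeasurableSpace Ω] {μ : Measure Ω} {f : Ω → ℝ} {s : Set Ω} {α γ C : ℝ}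

lemma setLIntegral_rpow_dyadic_shell_le (hγ : 0 ≤ γ)
    (hμ : ∀ t > 0, μ (f ⁻¹' Ioi t ∩ s) ≤ ENNReal.ofReal (C * t ^ (-α)))
    {r : ℝ} (hr : 0 < r) (k : ℕ) :
    ∫⁻ x in f ⁻¹' Ioc (2 ^ k * r) (2 ^ (k + 1) * r) ∩ s, ENNReal.ofReal (f x ^ γ) ∂μ ≤
      ENNReal.ofReal (C * 2 ^ γ * r ^ (γ - α) * ((2 : ℝ) ^ (γ - α)) ^ k) := by
  set shell := f ⁻¹' Ioc (2 ^ k * r) (2 ^ (k + 1) * r) ∩ s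
  have hu : 0 < (2 : ℝ) ^ k * r := by positivity
  calc ∫⁻ x in shell, ENNReal.ofReal (f x ^ γ) ∂μ
      ≤ ∫⁻ _ in shell, ENNReal.ofReal ((2 ^ (k + 1) * r) ^ γ) ∂μ :=
        setLIntegral_mono measurable_const fun x hx =>
          ENNReal.ofReal_le_ofReal (Real.rpow_le_rpow (hu.trans hx.1.1).le hx.1.2 hγ)
    _ = ENNReal.ofReal ((2 ^ (k + 1) * r) ^ γ) * μ shell := setLIntegral_const _ _
    _ ≤ ENNReal.ofReal ((2 ^ (k + 1) * r) ^ γ) * ENNReal.ofReal (C * (2 ^ k * r) ^ (-α)) := by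
        gcongr
        exact (measure_mono (inter_subset_inter_left s (preimage_mono Ioc_subset_Ioi_self))).trans
          (hμ _ hu)
    _ = _ := by
        rw [← ENNReal.ofReal_mul (by positivity), two_pow_succ_mul_rpow_mul_rpow_neg hr]

theorem setLIntegral_rpow_le_of_measure_le_rpow_neg (hγ : 0 ≤ γ) (hγα : γ < α) (hC : 0 ≤ C)
    (hμ : ∀ t > 0, μ (f ⁻¹' Ioi t ∩ s) ≤ ENNReal.ofReal (C * t ^ (-α)))
    {r : ℝ} (hr : 0 < r) :
    ∫⁻ x in f ⁻¹' Ioi r ∩ s, ENNReal.ofReal (f x ^ γ) ∂μ ≤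
      ENNReal.ofReal (C * 2 ^ α / (2 ^ (α - γ) - 1) * r ^ (γ - α)) := by
  have hq0 : (0 : ℝ) ≤ 2 ^ (γ - α) := by positivity
  have hq1 : (2 : ℝ) ^ (γ - α) < 1 := Real.rpow_lt_one_of_one_lt_of_neg one_lt_two (by linarith)
  have hcover : f ⁻¹' Ioi r ∩ s ⊆ ⋃ k : ℕ, f ⁻¹' Ioc (2 ^ k * r) (2 ^ (k + 1) * r) ∩ s := by
    rw [← iUnion_inter, ← preimage_iUnion]
    exact inter_subset_inter_left s (preimage_mono (Ioi_subset_iUnion_Ioc_two_pow_mul hr))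
  calc ∫⁻ x in f ⁻¹' Ioi r ∩ s, ENNReal.ofReal (f x ^ γ) ∂μ
      ≤ ∑' k : ℕ, ∫⁻ x in f ⁻¹' Ioc (2 ^ k * r) (2 ^ (k + 1) * r) ∩ s,
          ENNReal.ofReal (f x ^ γ) ∂μ :=
        (lintegral_mono_set hcover).trans (lintegral_iUnion_le _ _)
    _ ≤ ∑' k : ℕ, ENNReal.ofReal (C * 2 ^ γ * r ^ (γ - α) * ((2 : ℝ) ^ (γ - α)) ^ k) :=
        ENNReal.tsum_le_tsum (setLIntegral_rpow_dyadic_shell_le hγ hμ hr)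
    _ = ENNReal.ofReal (C * 2 ^ γ * r ^ (γ - α) * (1 - 2 ^ (γ - α))⁻¹) := by
        rw [← ENNReal.ofReal_tsum_of_nonneg (fun k => by positivity)
          ((summable_geometric_of_lt_one hq0 hq1).mul_left _), tsum_mul_left,
          tsum_geometric_of_lt_one hq0 hq1]
    _ = ENNReal.ofReal (C * 2 ^ α / (2 ^ (α - γ) - 1) * r ^ (γ - α)) := by
        rw [mul_div_assoc, ← two_rpow_mul_inv_one_sub_two_rpow_sub hγα]
        congr 1
        ring

end DyadicShells

theorem stmt_2_general (α γ c : ℝ) (hγ0 : 0 < γ) (hγα : γ < α) (hc : 0 ≤ c)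
    (μ : Measure ℝ)
    (hμ : ∀ r : ℝ, r ∈ Set.Ioo (0 : ℝ) 1 →
      ENNReal.ofReal (r ^ α) * μ {x : ℝ | r < |x| ∧ |x| ≤ 1} ≤ ENNReal.ofReal c) :
    ∀ r : ℝ, r ∈ Set.Ioc (0 : ℝ) 1 →
      ∫⁻ x in {x : ℝ | r < |x| ∧ |x| ≤ 1}, ENNReal.ofReal (|x| ^ γ) ∂μ
        ≤ ENNReal.ofReal (c * 2 ^ (2 * α - γ) / (2 ^ (α - γ) - 1) * r ^ (γ - α)) := by
  rintro r ⟨hr, -⟩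
  have h_tail : ∀ t > 0, μ (abs ⁻¹' Ioi t ∩ {x | |x| ≤ 1}) ≤ ENNReal.ofReal (c * t ^ (-α)) := by
    intro t ht
    rcases lt_or_ge t 1 with ht1 | ht1
    · exact ENNReal.le_ofReal_mul_rpow_neg_of_ofReal_rpow_mul_le ht (hμ t ⟨ht, ht1⟩)
    · have h_empty : abs ⁻¹' Ioi t ∩ {x : ℝ | |x| ≤ 1} = ∅ :=
        eq_empty_of_forall_notMem fun x hx => (hx.1.trans_le hx.2).not_ge ht1
      simp [h_empty]
  refine (setLIntegral_rpow_le_of_measure_le_rpow_neg hγ0.le hγα hc h_tail hr).trans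
    (ENNReal.ofReal_le_ofReal ?_)
  have hp : 0 < (2 : ℝ) ^ (α - γ) - 1 := sub_pos.2 (Real.one_lt_rpow one_lt_two (by linarith))
  gcongr
  · exact one_le_two
  · linarith

theorem stmt_2 (α γ c : ℝ) (hγ0 : 0 < γ) (hγα : γ < α) (hc : 0 ≤ c)
    (μ : Measure ℝ)
    (hsupp : μ {x : ℝ | ¬ x ∈ Set.Icc (-1 : ℝ) 1} = 0)
    (h0 : μ {(0 : ℝ)} = 0)
    (hμ : ∀ r : ℝ, r ∈ Set.Ioo (0 : ℝ) 1 →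
      ENNReal.ofReal (r ^ α) * μ {x : ℝ | r < |x| ∧ |x| ≤ 1} ≤ ENNReal.ofReal c) :
    ∀ r : ℝ, r ∈ Set.Ioc (0 : ℝ) 1 →
      ∫⁻ x in {x : ℝ | r < |x| ∧ |x| ≤ 1}, ENNReal.ofReal (|x| ^ γ) ∂μ
        ≤ ENNReal.ofReal (c * 2 ^ (2 * α - γ) / (2 ^ (α - γ) - 1) * r ^ (γ - α)) :=
  stmt_2_general α γ c hγ0 hγα hc μ hμ
end

section
/- For θ ∈ (0,1] and n ≥ 1, define the adapted time-net τ^θ_n = (t^θ_{i,n})_{i=0}^n on [0,T] by t^θ_{i,n} := T(1 - (1 - i/n)^{1/θ}). For a net τ = (t_i)_{i=0}^n define ‖τ‖_θ := max_{i=1,…,n} (t_i - t_{i-1}) / (T - t_{i-1})^{1-θ}. Then T^θ/n ≤ ‖τ^θ_n‖_θ ≤ T^θ/(θ n). -/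
/-!
With `a = 1 - (i-1)/n` and `b = 1 - i/n`, the `i`-th quotient in `‖τ^θ_n‖_θ` equals
`T^θ · a · (1 - (b/a)^{1/θ})`. For `p = 1/θ ≥ 1` and `0 ≤ s ≤ 1` we have
`1 - s ≤ 1 - s^p ≤ p (1 - s)`, the right inequality being Bernoulli's. Hence every quotient is
at most `T^θ p (a - b) = T^θ/(θn)`, while the first one (`a = 1`) is at least `T^θ/n`.
-/

/-- The mesh size `‖τ‖_θ` of a time-net `(t_i)_{i=0}^n` on `[0,T]`. -/
noncomputable def meshTheta (T θ : ℝ) (n : ℕ) (hn : 1 ≤ n) (t : ℕ → ℝ) : ℝ :=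
  (Finset.Icc 1 n).sup' (Finset.nonempty_Icc.mpr hn)
    (fun i => (t i - t (i - 1)) / (T - t (i - 1)) ^ (1 - θ))

open Real

lemma one_sub_rpow_le_mul_one_sub {p t : ℝ} (hp : 1 ≤ p) (ht : 0 ≤ t) :
    1 - t ^ p ≤ p * (1 - t) := by
  have h := one_add_mul_self_le_rpow_one_add (by linarith : -1 ≤ t - 1) hp
  rw [add_sub_cancel] at h
  linarith

lemma mul_one_sub_div_rpow_le {p a b : ℝ} (hp : 1 ≤ p) (ha : 0 < a) (hb : 0 ≤ b) :
    a * (1 - (b / a) ^ p) ≤ p * (a - b) :=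
  calc a * (1 - (b / a) ^ p) ≤ a * (p * (1 - b / a)) := by
        gcongr; exact one_sub_rpow_le_mul_one_sub hp (by positivity)
    _ = p * (a - b) := by field_simp

lemma rpow_step_ratio {T θ a b : ℝ} (hT : 0 < T) (hθ : 0 < θ) (ha : 0 < a) (hb : 0 ≤ b) :
    (T * (1 - b ^ (1 / θ)) - T * (1 - a ^ (1 / θ))) / (T - T * (1 - a ^ (1 / θ))) ^ (1 - θ) =
      T ^ θ * a * (1 - (b / a) ^ (1 / θ)) := by
  have hT_split : T = T ^ θ * T ^ (1 - θ) := by rw [← rpow_add hT]; simp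
  have ha_split : a ^ (1 / θ) = a * a ^ (1 / θ - 1) := by
    rw [rpow_sub ha, rpow_one]; field_simp
  have hden : (T - T * (1 - a ^ (1 / θ))) ^ (1 - θ) = T ^ (1 - θ) * a ^ (1 / θ - 1) := by
    rw [show T - T * (1 - a ^ (1 / θ)) = T * a ^ (1 / θ) by ring, mul_rpow hT.le (by positivity),
      ← rpow_mul ha.le]
    congr 2
    field_simp
  have hA : 0 < a ^ (1 / θ - 1) := by positivity
  rw [hden, div_rpow hb ha.le, ha_split, div_eq_iff (by positivity)]
  generalize a ^ (1 / θ - 1) = A at *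
  field_simp
  linear_combination (a * A - b ^ (1 / θ)) * hT_split

noncomputable def adaptedNet (T θ : ℝ) (n i : ℕ) : ℝ := T * (1 - (1 - (i : ℝ) / n) ^ (1 / θ))

lemma adaptedNet_step_ratio {T θ : ℝ} (hT : 0 < T) (hθ : 0 < θ) {n i : ℕ} (hi : 1 ≤ i)
    (hin : i ≤ n) :
    (adaptedNet T θ n i - adaptedNet T θ n (i - 1)) / (T - adaptedNet T θ n (i - 1)) ^ (1 - θ) =
      T ^ θ * (1 - (i - 1) / n) * (1 - ((1 - i / n) / (1 - (i - 1) / n)) ^ (1 / θ)) := by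
  have hn : (0 : ℝ) < n := by exact_mod_cast hi.trans hin
  have hin' : (i : ℝ) ≤ n := by exact_mod_cast hin
  unfold adaptedNet
  rw [Nat.cast_sub hi, Nat.cast_one]
  exact rpow_step_ratio hT hθ (sub_pos.2 ((div_lt_one hn).2 (by linarith)))
    (sub_nonneg.2 ((div_le_one hn).2 hin'))

lemma le_meshTheta_adaptedNet {T θ : ℝ} (hT : 0 < T) (hθ : θ ∈ Set.Ioc (0 : ℝ) 1) {n : ℕ}
    (hn : 1 ≤ n) : T ^ θ / n ≤ meshTheta T θ n hn (adaptedNet T θ n) := by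
  refine le_trans ?_ (Finset.le_sup' _ (Finset.mem_Icc.mpr ⟨le_rfl, hn⟩))
  rw [adaptedNet_step_ratio hT hθ.1 le_rfl hn]
  have hn' : (1 : ℝ) ≤ n := by exact_mod_cast hn
  have h_base : 0 ≤ 1 - 1 / (n : ℝ) := sub_nonneg.2 ((div_le_one (by positivity)).2 hn')
  have h_pow : (1 - 1 / (n : ℝ)) ^ (1 / θ) ≤ 1 - 1 / n :=
    rpow_le_self_of_le_one h_base (sub_le_self _ (by positivity))
      (one_le_one_div hθ.1 hθ.2)
  simp only [Nat.cast_one, sub_self, zero_div, sub_zero, div_one, mul_one]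
  rw [div_eq_mul_one_div]
  gcongr
  linarith

lemma meshTheta_adaptedNet_le {T θ : ℝ} (hT : 0 < T) (hθ : θ ∈ Set.Ioc (0 : ℝ) 1) {n : ℕ}
    (hn : 1 ≤ n) : meshTheta T θ n hn (adaptedNet T θ n) ≤ T ^ θ / (θ * n) := by
  refine Finset.sup'_le _ _ fun i hi => ?_
  obtain ⟨hi, hin⟩ := Finset.mem_Icc.mp hi
  have hn' : (0 : ℝ) < n := by exact_mod_cast hn
  have hin' : (i : ℝ) ≤ n := by exact_mod_cast hin
  rw [adaptedNet_step_ratio hT hθ.1 hi hin, mul_assoc]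
  calc T ^ θ * ((1 - (i - 1) / n) * (1 - ((1 - i / n) / (1 - (i - 1) / n)) ^ (1 / θ)))
      ≤ T ^ θ * (1 / θ * ((1 - (i - 1) / n) - (1 - i / n))) := by
        refine mul_le_mul_of_nonneg_left (mul_one_sub_div_rpow_le (one_le_one_div hθ.1 hθ.2)
          (sub_pos.2 ((div_lt_one hn').2 (by linarith))) (sub_nonneg.2 ((div_le_one hn').2 hin')))
          (by positivity)
    _ = T ^ θ / (θ * n) := by field_simp; ring

theorem stmt_3 (T θ : ℝ) (hT : 0 < T) (hθ : θ ∈ Set.Ioc (0 : ℝ) 1) (n : ℕ) (hn : 1 ≤ n) :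
    T ^ θ / n ≤ meshTheta T θ n hn (fun i => T * (1 - (1 - (i : ℝ) / n) ^ (1 / θ))) ∧
    meshTheta T θ n hn (fun i => T * (1 - (1 - (i : ℝ) / n) ^ (1 / θ))) ≤ T ^ θ / (θ * n) :=
  ⟨le_meshTheta_adaptedNet hT hθ hn, meshTheta_adaptedNet_le hT hθ hn⟩
end

section
/- For any θ ∈ (0,1] and any deterministic time-net τ_n = (t_i)_{i=0}^n on [0,T] with 0 = t_0 < t_1 < ⋯ < t_n = T, one has ‖τ_n‖_θ ≥ T^θ/n, where ‖τ_n‖_θ := max_{i=1,…,n} (t_i - t_{i-1})/(T - t_{i-1})^{1-θ}. -/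
/-!
Each term of the mesh dominates an increment of `s ↦ (T - s)^θ`:
`(T - t_i)^θ - (T - t_{i+1})^θ ≤ (t_{i+1} - t_i) / (T - t_i)^{1-θ}`.
Summing over the `n` steps telescopes to `T^θ - 0^θ = T^θ ≤ n ‖τ‖_θ`.
-/

open Finset

/-- Write `a = a^θ a^{1-θ}` and `b = b^θ b^{1-θ} ≤ b^θ a^{1-θ}`. -/
theorem Real.rpow_sub_rpow_le_sub_div_rpow {a b θ : ℝ} (ha : 0 < a) (hb : 0 ≤ b) (hba : b ≤ a)
    (hθ : θ ≤ 1) : a ^ θ - b ^ θ ≤ (a - b) / a ^ (1 - θ) := by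
  rw [le_div_iff₀ (Real.rpow_pos_of_pos ha _)]
  have ha_split : a ^ θ * a ^ (1 - θ) = a := by
    rw [← Real.rpow_add ha, add_sub_cancel, Real.rpow_one]
  have hb_split : b ≤ b ^ θ * a ^ (1 - θ) :=
    calc b = b ^ θ * b ^ (1 - θ) := by
          rw [← Real.rpow_add' hb (by norm_num), add_sub_cancel, Real.rpow_one]
      _ ≤ b ^ θ * a ^ (1 - θ) := by gcongr
  linarith [sub_mul (a ^ θ) (b ^ θ) (a ^ (1 - θ))]

theorem sub_div_rpow_le_meshTheta {T θ : ℝ} {n : ℕ} (hn : 1 ≤ n) (t : ℕ → ℝ) {i : ℕ}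
    (hi : i < n) :
    (t (i + 1) - t i) / (T - t i) ^ (1 - θ) ≤ meshTheta T θ n hn t :=
  Finset.le_sup' (fun j => (t j - t (j - 1)) / (T - t (j - 1)) ^ (1 - θ))
    (Finset.mem_Icc.mpr ⟨Nat.le_add_left 1 i, hi⟩)

theorem stmt_4_general (T θ : ℝ) (hθ : θ ∈ Set.Ioc (0 : ℝ) 1) (n : ℕ) (hn : 1 ≤ n)
    (t : ℕ → ℝ) (ht0 : t 0 = 0) (htn : t n = T)
    (hmono : ∀ i < n, t i < t (i + 1)) :
    T ^ θ / n ≤ meshTheta T θ n hn t := by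
  obtain ⟨hθ0, hθ1⟩ := hθ
  have hstrict : StrictMonoOn t (Set.Iic n) := strictMonoOn_Iic_of_lt_succ hmono
  have hstep : ∀ i ∈ range n,
      (T - t i) ^ θ - (T - t (i + 1)) ^ θ ≤ meshTheta T θ n hn t := by
    intro i hi
    have hi : i < n := mem_range.mp hi
    have hlt : t i < t (i + 1) := hmono i hi
    have hle : t (i + 1) ≤ T :=
      htn ▸ hstrict.monotoneOn (Set.mem_Iic.mpr hi) Set.self_mem_Iic hi
    calc (T - t i) ^ θ - (T - t (i + 1)) ^ θ
        ≤ (T - t i - (T - t (i + 1))) / (T - t i) ^ (1 - θ) :=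
          Real.rpow_sub_rpow_le_sub_div_rpow (by linarith) (by linarith) (by linarith) hθ1
      _ = (t (i + 1) - t i) / (T - t i) ^ (1 - θ) := by rw [sub_sub_sub_cancel_left]
      _ ≤ meshTheta T θ n hn t := sub_div_rpow_le_meshTheta hn t hi
  have htelescope : ∑ i ∈ range n, ((T - t i) ^ θ - (T - t (i + 1)) ^ θ) = T ^ θ := by
    rw [sum_range_sub' (fun i => (T - t i) ^ θ), ht0, htn, sub_zero, sub_self,
      Real.zero_rpow hθ0.ne', sub_zero]
  rw [div_le_iff₀ (by exact_mod_cast hn), mul_comm, ← htelescope]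
  simpa using sum_le_sum hstep

theorem stmt_4 (T θ : ℝ) (hT : 0 < T) (hθ : θ ∈ Set.Ioc (0 : ℝ) 1) (n : ℕ) (hn : 1 ≤ n)
    (t : ℕ → ℝ) (ht0 : t 0 = 0) (htn : t n = T)
    (hmono : ∀ i < n, t i < t (i + 1)) :
    T ^ θ / n ≤ meshTheta T θ n hn t :=
  stmt_4_general T θ hθ n hn t ht0 htn hmono
end

section
/- For all real numbers 0 < a < b, one has b·log⁺(1/b) − a·log⁺(1/a) ≤ (b − a)·log⁺(1/(b − a)), where log⁺ x := log₂(max{x, 1}). -/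
open Real

lemma monotone_logb_max_one {β : ℝ} (hβ : 1 < β) : Monotone fun x : ℝ => logb β (max x 1) :=
  fun _ _ hxy => logb_le_logb_of_le hβ (one_pos.trans_le (le_max_right _ _)) (max_le_max_right 1 hxy)

/-- Write `(a + c) * L (a + c) = a * L (a + c) + c * L (a + c)` and use that
`L x = logb β (max (1 / x) 1)` is antitone on `(0, ∞)`. -/
lemma mul_logb_max_one_div_add_le {β a c : ℝ} (hβ : 1 < β) (ha : 0 < a) (hc : 0 < c) :
    (a + c) * logb β (max (1 / (a + c)) 1)
      ≤ a * logb β (max (1 / a) 1) + c * logb β (max (1 / c) 1) := by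
  have hmono := monotone_logb_max_one hβ
  have hle_a : logb β (max (1 / (a + c)) 1) ≤ logb β (max (1 / a) 1) :=
    hmono (one_div_le_one_div_of_le ha (by linarith))
  have hle_c : logb β (max (1 / (a + c)) 1) ≤ logb β (max (1 / c) 1) :=
    hmono (one_div_le_one_div_of_le hc (by linarith))
  rw [add_mul]
  exact add_le_add (mul_le_mul_of_nonneg_left hle_a ha.le) (mul_le_mul_of_nonneg_left hle_c hc.le)

theorem stmt_5 (a b : ℝ) (ha : 0 < a) (hab : a < b) :
    b * Real.logb 2 (max (1 / b) 1) - a * Real.logb 2 (max (1 / a) 1)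
      ≤ (b - a) * Real.logb 2 (max (1 / (b - a)) 1) := by
  have h := mul_logb_max_one_div_add_le one_lt_two ha (sub_pos.2 hab)
  rw [add_sub_cancel] at h
  linarith
end

section
/- Let (Ω, F, P, (F_t)_{t∈[0,T]}) be a filtered probability space and Φ = (Φ_t)_{t∈[0,T]} a nonnegative càdlàg adapted process. Define Φ̄_t := Φ_t + sup_{s∈[0,t]} |ΔΦ_s|, where ΔΦ_s := Φ_s − Φ_{s−}. If Φ belongs to SM_p(P) for some p ∈ [1, ∞), i.e. E[sup_{t∈[a,T]} Φ_t^p | F_a] ≤ c^p Φ_a^p a.s. for all a ∈ [0,T] with best constant ‖Φ‖_{SM_p}, then Φ̄ ∈ SM_p(P) with ‖Φ̄‖_{SM_p(P)} ≤ 3‖Φ‖_{SM_p(P)} + 1. -/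
/-!
For `a ≤ t ≤ T`, a jump of `Φ` at a time in `(a, t]` is at most `S = sup_{[a,T]} Φ`, so
`Φ̄_t ≤ 2 S + J` with `J = sup_{s ≤ a} |ΔΦ_s|`. Since `J` is `F_a`-measurable, a conditional
Minkowski inequality gives
`E[sup_{[a,T]} Φ̄^p | F_a]^{1/p} ≤ 2 E[S^p | F_a]^{1/p} + J ≤ 2 c Φ_a + J ≤ (3c + 1) Φ̄_a`.
The conditional Minkowski step comes from the convexity bound
`(x + y)^p ≤ l^{1-p} x^p + (1-l)^{1-p} y^p`, taken for all rational `l ∈ (0,1)` at once and then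
optimised pathwise. The measurability of `J` rests on writing it as the limit, as `δ → 0`, of the
largest increment of `Φ` over pairs of rational times at distance less than `δ`.
-/

open MeasureTheory

/-- The set of admissible constants `c` in the definition of the weighted
`SM_p(P)` class: `E[sup_{t∈[a,T]} Φ_t^p | F_a] ≤ c^p Φ_a^p` a.s. for all `a ∈ [0,T]`. -/
noncomputable def smSet {Ω : Type*} [MeasurableSpace Ω] (P : Measure Ω)
    (ℱ : ℝ → MeasurableSpace Ω) (T p : ℝ) (Φ : ℝ → Ω → ℝ) : Set ℝ :=
  {c : ℝ | 0 ≤ c ∧ ∀ a ∈ Set.Icc (0 : ℝ) T,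
    ∀ᵐ ω ∂P, (P[(fun ω' => ⨆ t : Set.Icc a T, Φ t.1 ω' ^ p) | ℱ a]) ω
      ≤ c ^ p * Φ a ω ^ p}

/-- `‖Φ‖_{SM_p(P)}`, the best admissible constant. -/
noncomputable def smNorm {Ω : Type*} [MeasurableSpace Ω] (P : Measure Ω)
    (ℱ : ℝ → MeasurableSpace Ω) (T p : ℝ) (Φ : ℝ → Ω → ℝ) : ℝ :=
  sInf (smSet P ℱ T p Φ)

/-- The modified weight `Φ̄_t = Φ_t + sup_{s ∈ [0,t]} |ΔΦ_s|`, where `Φm` is the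
process of left limits of `Φ` (with `Φm 0 = Φ 0`). -/
noncomputable def smBar (Φ Φm : ℝ → Ω → ℝ) : ℝ → Ω → ℝ :=
  fun t ω => Φ t ω + ⨆ s : Set.Icc (0 : ℝ) t, |Φ s.1 ω - Φm s.1 ω|

open Set Filter Topology

theorem add_rpow_le_weighted {p x y l : ℝ} (hp : 1 ≤ p) (hx : 0 ≤ x) (hy : 0 ≤ y)
    (hl : l ∈ Ioo 0 1) :
    (x + y) ^ p ≤ l ^ (1 - p) * x ^ p + (1 - l) ^ (1 - p) * y ^ p := by
  obtain ⟨hl0, hl1⟩ := hl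
  have hl1' : 0 < 1 - l := sub_pos.2 hl1
  have key := (convexOn_rpow hp).2 (mem_Ici.2 (div_nonneg hx hl0.le))
    (mem_Ici.2 (div_nonneg hy hl1'.le)) hl0.le hl1'.le (add_sub_cancel l 1)
  have weight : ∀ {w z : ℝ}, 0 < w → 0 ≤ z → w * (z / w) ^ p = w ^ (1 - p) * z ^ p :=
    fun hw hz => by
      rw [Real.div_rpow hz hw.le, Real.rpow_sub hw, Real.rpow_one]
      field_simp
  simp only [smul_eq_mul, mul_div_cancel₀ _ hl0.ne', mul_div_cancel₀ _ hl1'.ne',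
    weight hl0 hx, weight hl1' hy] at key
  exact key

theorem weighted_rpow_add_eq {p x y : ℝ} (hx : 0 < x) (hy : 0 < y) :
    (x / (x + y)) ^ (1 - p) * x ^ p + (y / (x + y)) ^ (1 - p) * y ^ p = (x + y) ^ p := by
  have hxy : 0 < x + y := add_pos hx hy
  have weight : ∀ {z : ℝ}, 0 < z → (z / (x + y)) ^ (1 - p) * z ^ p = z / (x + y) ^ (1 - p) :=
    fun hz => by
      rw [Real.div_rpow hz.le hxy.le, div_mul_eq_mul_div, ← Real.rpow_add hz, sub_add_cancel,
        Real.rpow_one]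
  rw [weight hx, weight hy, ← add_div, div_eq_iff (Real.rpow_pos_of_pos hxy _).ne',
    ← Real.rpow_add hxy, add_sub_cancel, Real.rpow_one]

theorem le_add_rpow_of_forall_rat {p x y L : ℝ} (hp : 1 ≤ p) (hx : 0 ≤ x) (hy : 0 ≤ y)
    (h : ∀ l : ℚ, (l : ℝ) ∈ Ioo 0 1 →
      L ≤ (l : ℝ) ^ (1 - p) * x ^ p + (1 - (l : ℝ)) ^ (1 - p) * y ^ p) :
    L ≤ (x + y) ^ p := by
  have hreal : ∀ l ∈ Ioo (0 : ℝ) 1, L ≤ l ^ (1 - p) * x ^ p + (1 - l) ^ (1 - p) * y ^ p := by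
    intro l hl
    have hcont : ContinuousAt (fun l : ℝ => l ^ (1 - p) * x ^ p + (1 - l) ^ (1 - p) * y ^ p) l :=
      ((continuousAt_id.rpow_const (Or.inl hl.1.ne')).mul continuousAt_const).add
        (((continuousAt_const.sub continuousAt_id).rpow_const
          (Or.inl (sub_pos.2 hl.2).ne')).mul continuousAt_const)
    refine closure_minimal ?_ isClosed_Ici (hcont.continuousWithinAt.mem_closure_image
      (Rat.denseRange_cast.open_subset_closure_inter isOpen_Ioo hl))
    rintro _ ⟨_, ⟨hq, q, rfl⟩, rfl⟩
    exact h q hq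
  -- The optimal weight `x / (x + y)` lies in `(0, 1)` only when `x, y > 0`, hence the shift by `δ`.
  have hshift : ∀ δ > 0, L ≤ (x + y + 2 * δ) ^ p := by
    intro δ hδ
    have hxδ : 0 < x + δ := by positivity
    have hyδ : 0 < y + δ := by positivity
    have hsum : x + δ + (y + δ) = x + y + 2 * δ := by ring
    have hl : (x + δ) / (x + y + 2 * δ) ∈ Ioo (0 : ℝ) 1 :=
      ⟨by positivity, (div_lt_one (by positivity)).2 (by linarith)⟩
    have hcompl : 1 - (x + δ) / (x + y + 2 * δ) = (y + δ) / (x + y + 2 * δ) := by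
      field_simp; ring
    calc L ≤ _ := hreal _ hl
      _ ≤ ((x + δ) / (x + y + 2 * δ)) ^ (1 - p) * (x + δ) ^ p
          + ((y + δ) / (x + y + 2 * δ)) ^ (1 - p) * (y + δ) ^ p := by
        rw [hcompl]
        gcongr <;> linarith
      _ = (x + y + 2 * δ) ^ p := by
        rw [← hsum]; exact weighted_rpow_add_eq hxδ hyδ
  have hlim : Tendsto (fun δ : ℝ => (x + y + 2 * δ) ^ p) (𝓝[>] 0) (𝓝 ((x + y) ^ p)) := by
    have : ContinuousAt (fun δ : ℝ => (x + y + 2 * δ) ^ p) 0 :=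
      (by fun_prop : ContinuousAt (fun δ : ℝ => x + y + 2 * δ) 0).rpow_const
        (Or.inr (by linarith))
    simpa using this.tendsto.mono_left nhdsWithin_le_nhds
  exact ge_of_tendsto hlim (eventually_nhdsWithin_of_forall hshift)

theorem condExp_le_add_rpow {Ω : Type*} {m m0 : MeasurableSpace Ω} {μ : Measure Ω}
    (hm : m ≤ m0) [SigmaFinite (μ.trim hm)] {p : ℝ} (hp : 1 ≤ p) {G X Y B : Ω → ℝ}
    (hX : 0 ≤ X) (hY : 0 ≤ Y) (hB : 0 ≤ B) (hGXY : ∀ ω, G ω ≤ (X ω + Y ω) ^ p)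
    (hG : Integrable G μ) (hXp : Integrable (fun ω => X ω ^ p) μ)
    (hYp : Integrable (fun ω => Y ω ^ p) μ) (hYm : Measurable[m] Y)
    (hXB : μ[fun ω => X ω ^ p | m] ≤ᵐ[μ] fun ω => B ω ^ p) :
    μ[G | m] ≤ᵐ[μ] fun ω => (B ω + Y ω) ^ p := by
  have hYcond : μ[fun ω => Y ω ^ p | m] = fun ω => Y ω ^ p :=
    condExp_of_stronglyMeasurable hm (hYm.pow_const p).stronglyMeasurable hYp
  have hweighted : ∀ l ∈ Ioo (0 : ℝ) 1,
      ∀ᵐ ω ∂μ, μ[G | m] ω ≤ l ^ (1 - p) * B ω ^ p + (1 - l) ^ (1 - p) * Y ω ^ p := by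
    intro l hl
    set c₁ := l ^ (1 - p)
    set c₂ := (1 - l) ^ (1 - p)
    have hmono := condExp_mono (m := m) hG ((hXp.smul c₁).add (hYp.smul c₂))
      (ae_of_all _ fun ω => (hGXY ω).trans (add_rpow_le_weighted hp (hX ω) (hY ω) hl))
    filter_upwards [hmono, condExp_add (hXp.smul c₁) (hYp.smul c₂) m,
      condExp_smul (m := m) c₁ (fun ω => X ω ^ p), condExp_smul (m := m) c₂ (fun ω => Y ω ^ p),
      hXB] with ω hmono hadd hsmul₁ hsmul₂ hXB
    simp only [Pi.add_apply, Pi.smul_apply, smul_eq_mul, hYcond] at hmono hadd hsmul₁ hsmul₂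
    rw [hadd, hsmul₁, hsmul₂] at hmono
    exact hmono.trans (by gcongr; exact Real.rpow_nonneg hl.1.le _)
  have hall : ∀ᵐ ω ∂μ, ∀ l : ℚ, (l : ℝ) ∈ Ioo 0 1 →
      μ[G | m] ω ≤ (l : ℝ) ^ (1 - p) * B ω ^ p + (1 - (l : ℝ)) ^ (1 - p) * Y ω ^ p := by
    refine ae_all_iff.2 fun l => ?_
    by_cases hl : (l : ℝ) ∈ Ioo 0 1
    · filter_upwards [hweighted l hl] with ω hω _ using hω
    · exact ae_of_all _ fun ω h => absurd h hl
  filter_upwards [hall] with ω hω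
  exact le_add_rpow_of_forall_rat hp (hB ω) (hY ω) hω

/-- `fm` is the left-limit function of `f`; there is no left limit at time `0`, and `fm 0 = f 0`
puts no jump there. -/
structure IsCadlag (f fm : ℝ → ℝ) : Prop where
  continuousWithinAt_Ici : ∀ t, ContinuousWithinAt f (Ici t) t
  tendsto_nhdsLT : ∀ t, 0 < t → Tendsto f (𝓝[<] t) (𝓝 (fm t))
  leftLim_zero : fm 0 = f 0

noncomputable def jumpSup (f fm : ℝ → ℝ) (t : ℝ) : ℝ := ⨆ s : Icc (0 : ℝ) t, |f s - fm s|

theorem jumpSup_nonneg (f fm : ℝ → ℝ) (t : ℝ) : 0 ≤ jumpSup f fm t :=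
  Real.iSup_nonneg fun _ => abs_nonneg _

theorem smBar_eq_add_jumpSup {Ω : Type*} (Φ Φm : ℝ → Ω → ℝ) (t : ℝ) (ω : Ω) :
    smBar Φ Φm t ω = Φ t ω + jumpSup (Φ · ω) (Φm · ω) t := rfl

namespace IsCadlag

variable {f fm : ℝ → ℝ}

theorem eventually_abs_sub_lt (hf : IsCadlag f fm) {s ε : ℝ} (hs : 0 ≤ s) (hε : 0 < ε) :
    ∀ᶠ u in 𝓝 s, 0 ≤ u → (u < s → |f u - fm s| < ε) ∧ (s ≤ u → |f u - f s| < ε) := by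
  rw [← nhdsLT_sup_nhdsGE, eventually_sup]
  refine ⟨?_, ?_⟩
  · rcases hs.eq_or_lt with rfl | hs
    · filter_upwards [self_mem_nhdsWithin] with u hu hu0 using absurd hu0 (not_le.2 hu)
    · filter_upwards [self_mem_nhdsWithin,
        (hf.tendsto_nhdsLT s hs).eventually (Metric.ball_mem_nhds _ hε)] with u hu hfu _
      exact ⟨fun _ => hfu, fun h => absurd hu (not_lt.2 h)⟩
  · filter_upwards [self_mem_nhdsWithin,
      (hf.continuousWithinAt_Ici s).eventually (Metric.ball_mem_nhds _ hε)] with u hu hfu _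
    exact ⟨fun h => absurd hu (not_le.2 h), fun _ => hfu⟩

theorem leftLim_mem (hf : IsCadlag f fm) {K : Set ℝ} (hK : IsClosed K) {b s : ℝ} (hs : 0 < s)
    (hbs : b < s) (h : ∀ u ∈ Ioo b s, f u ∈ K) : fm s ∈ K :=
  hK.mem_of_tendsto (hf.tendsto_nhdsLT s hs) (eventually_of_mem (Ioo_mem_nhdsLT hbs) h)

theorem exists_bound (hf : IsCadlag f fm) (T : ℝ) :
    ∃ M, ∀ s ∈ Icc 0 T, |f s| ≤ M ∧ |fm s| ≤ M := by
  have hbdd : BddAbove ((fun s => |f s|) '' Icc 0 T) := by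
    refine isCompact_Icc.induction_on (p := fun K => BddAbove ((fun s => |f s|) '' K))
      (by simp) (fun _ _ hst ht => ht.mono (image_mono hst))
      (fun _ _ hs ht => by rw [image_union]; exact hs.union ht) fun x hx => ?_
    refine ⟨Icc 0 T ∩ {u | 0 ≤ u → (u < x → |f u - fm x| < 1) ∧ (x ≤ u → |f u - f x| < 1)},
      inter_mem_nhdsWithin _ (hf.eventually_abs_sub_lt hx.1 one_pos), max |f x| |fm x| + 1, ?_⟩
    rintro _ ⟨u, ⟨hu, hux⟩, rfl⟩
    obtain ⟨hlt, hge⟩ := hux hu.1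
    rcases lt_or_ge u x with h | h
    · have := abs_sub_abs_le_abs_sub (f u) (fm x)
      linarith [hlt h, le_max_right |f x| |fm x|]
    · have := abs_sub_abs_le_abs_sub (f u) (f x)
      linarith [hge h, le_max_left |f x| |fm x|]
  obtain ⟨M, hM⟩ := hbdd
  have hfM : ∀ s ∈ Icc 0 T, |f s| ≤ M := fun s hs => hM ⟨s, hs, rfl⟩
  refine ⟨M, fun s hs => ⟨hfM s hs, ?_⟩⟩
  rcases hs.1.eq_or_lt with rfl | hs0
  · rw [hf.leftLim_zero]; exact hfM 0 hs
  · exact hf.leftLim_mem (isClosed_le continuous_abs continuous_const) hs0 hs0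
      fun u hu => hfM u ⟨hu.1.le, hu.2.le.trans hs.2⟩

theorem bddAbove_jump (hf : IsCadlag f fm) (t : ℝ) :
    BddAbove (range fun s : Icc (0 : ℝ) t => |f s - fm s|) := by
  obtain ⟨M, hM⟩ := hf.exists_bound t
  exact ⟨M + M, forall_mem_range.2 fun s =>
    (abs_sub _ _).trans (add_le_add (hM s s.2).1 (hM s s.2).2)⟩

theorem exists_abs_sub_le_jumpSup_add (hf : IsCadlag f fm) {a ε : ℝ} (hε : 0 < ε) :
    ∃ δ > 0, ∀ u ∈ Icc 0 a, ∀ v ∈ Icc 0 a, |u - v| < δ → |f u - f v| ≤ jumpSup f fm a + ε := by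
  -- Near `s`, `f` is close to `fm s` on the left and to `f s` on the right; a Lebesgue number
  -- of these neighbourhoods makes this uniform in `s`.
  obtain ⟨δ, hδ, hcover⟩ := Metric.uniformity_basis_dist.lebesgue_number_lemma_nhdsWithin'
    (K := Icc (0 : ℝ) a)
    (U := fun s _ => {u | 0 ≤ u → (u < s → |f u - fm s| < ε / 2) ∧ (s ≤ u → |f u - f s| < ε / 2)})
    isCompact_Icc fun s hs => mem_nhdsWithin_of_mem_nhds
      (hf.eventually_abs_sub_lt hs.1 (half_pos hε))
  refine ⟨δ, hδ, fun u hu v hv huv => ?_⟩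
  obtain ⟨⟨s, hs⟩, hsub⟩ := hcover u hu
  have hclose : ∀ w ∈ Icc 0 a, |w - u| < δ → ∃ r ∈ ({fm s, f s} : Set ℝ), |f w - r| < ε / 2 := by
    intro w hw hwu
    obtain ⟨hl, hr⟩ :=
      hsub ⟨by simpa [UniformSpace.ball, Real.dist_eq, abs_sub_comm] using hwu, hw⟩ hw.1
    rcases lt_or_ge w s with h | h
    · exact ⟨fm s, by simp, hl h⟩
    · exact ⟨f s, by simp, hr h⟩
  obtain ⟨r₁, hr₁, h₁⟩ := hclose u hu (by simpa using hδ)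
  obtain ⟨r₂, hr₂, h₂⟩ := hclose v hv (by rwa [abs_sub_comm])
  have hr : |r₁ - r₂| ≤ jumpSup f fm a := by
    refine le_trans ?_ (le_ciSup (hf.bddAbove_jump a) ⟨s, hs⟩)
    rcases hr₁ with rfl | rfl <;> rcases hr₂ with rfl | rfl <;> simp [abs_sub_comm]
  have := abs_sub_le (f u) r₁ (f v)
  have := abs_sub_le r₁ r₂ (f v)
  rw [abs_sub_comm r₂] at this
  linarith

theorem abs_sub_leftLim_le (hf : IsCadlag f fm) {D : Set ℝ} {s δ C : ℝ} (hs : 0 < s)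
    (hDl : s ∈ closure (Iio s ∩ D)) (hDr : s ∈ closure (Ici s ∩ D)) (hδ : 0 < δ)
    (hC : ∀ u ∈ D, ∀ v ∈ D, |u - v| < δ → |f u - f v| ≤ C) : |f s - fm s| ≤ C := by
  have := mem_closure_iff_nhdsWithin_neBot.1 hDl
  have := mem_closure_iff_nhdsWithin_neBot.1 hDr
  have hlim : Tendsto (fun q : ℝ × ℝ => |f q.2 - f q.1|)
      (𝓝[Iio s ∩ D] s ×ˢ 𝓝[Ici s ∩ D] s) (𝓝 |f s - fm s|) :=
    ((((hf.continuousWithinAt_Ici s).mono inter_subset_left).tendsto.comp tendsto_snd).sub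
      (((hf.tendsto_nhdsLT s hs).mono_left (nhdsWithin_mono _ inter_subset_left)).comp
        tendsto_fst)).abs
  have hnear : ∀ {A : Set ℝ}, ∀ᶠ u in 𝓝[A ∩ D] s, u ∈ D ∧ dist u s < δ / 2 := fun {A} =>
    (eventually_mem_nhdsWithin.mono fun _ hu => hu.2).and
      (mem_nhdsWithin_of_mem_nhds (Metric.ball_mem_nhds s (half_pos hδ)))
  refine le_of_tendsto hlim ?_
  filter_upwards [hnear.prod_mk hnear] with q ⟨⟨hq1, hd1⟩, ⟨hq2, hd2⟩⟩
  refine hC _ hq2 _ hq1 ?_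
  rw [← Real.dist_eq]
  linarith [dist_triangle_right q.2 q.1 s]

theorem jumpSup_le_add (hf : IsCadlag f fm) {a t S : ℝ} (ha : 0 ≤ a) (hat : a ≤ t)
    (hS : ∀ r ∈ Icc a t, f r ∈ Icc 0 S) : jumpSup f fm t ≤ jumpSup f fm a + S := by
  have hS0 : 0 ≤ S := (hS a ⟨le_rfl, hat⟩).1.trans (hS a ⟨le_rfl, hat⟩).2
  have : Nonempty (Icc 0 t) := ⟨⟨0, le_rfl, ha.trans hat⟩⟩
  refine ciSup_le fun s => ?_
  by_cases hsa : (s : ℝ) ≤ a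
  · exact (le_ciSup (hf.bddAbove_jump a) ⟨s, s.2.1, hsa⟩).trans (le_add_of_nonneg_right hS0)
  · push Not at hsa
    have hfs := hS s ⟨hsa.le, s.2.2⟩
    have hfms : fm s ∈ Icc 0 S := hf.leftLim_mem isClosed_Icc (ha.trans_lt hsa) hsa
      fun u hu => hS u ⟨hu.1.le, hu.2.le.trans s.2.2⟩
    exact (abs_sub_le_of_nonneg_of_le hfs.1 hfs.2 hfms.1 hfms.2).trans
      (le_add_of_nonneg_left (jumpSup_nonneg f fm a))

theorem bddAbove_rpow_add_jumpSup (hf : IsCadlag f fm) (h0 : ∀ t, 0 ≤ f t) {a T p : ℝ}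
    (ha : 0 ≤ a) (hp : 0 ≤ p) :
    BddAbove (range fun t : Icc a T => (f t + jumpSup f fm t) ^ p) := by
  obtain ⟨M, hM⟩ := hf.exists_bound T
  refine ⟨(M + (M + M)) ^ p, forall_mem_range.2 fun t => ?_⟩
  have ht : (t : ℝ) ∈ Icc 0 T := ⟨ha.trans t.2.1, t.2.2⟩
  have : Nonempty (Icc 0 (t : ℝ)) := ⟨⟨0, le_rfl, ht.1⟩⟩
  have hjump : jumpSup f fm t ≤ M + M := ciSup_le fun s =>
    (abs_sub _ _).trans (add_le_add (hM s ⟨s.2.1, s.2.2.trans ht.2⟩).1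
      (hM s ⟨s.2.1, s.2.2.trans ht.2⟩).2)
  exact Real.rpow_le_rpow (add_nonneg (h0 t) (jumpSup_nonneg f fm t))
    (add_le_add ((le_abs_self _).trans (hM t ht).1) hjump) hp

theorem bddAbove_rpow (hf : IsCadlag f fm) (h0 : ∀ t, 0 ≤ f t) {a T p : ℝ} (ha : 0 ≤ a)
    (hp : 0 ≤ p) : BddAbove (range fun t : Icc a T => f t ^ p) := by
  obtain ⟨B, hB⟩ := hf.bddAbove_rpow_add_jumpSup h0 ha hp (T := T)
  exact ⟨B, forall_mem_range.2 fun t => (Real.rpow_le_rpow (h0 t)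
    (le_add_of_nonneg_right (jumpSup_nonneg f fm t)) hp).trans (hB ⟨t, rfl⟩)⟩

theorem iSup_rpow_le_iSup_rpow_add_jumpSup (hf : IsCadlag f fm) (h0 : ∀ t, 0 ≤ f t)
    {a T p : ℝ} (ha : 0 ≤ a) (haT : a ≤ T) (hp : 0 ≤ p) :
    ⨆ t : Icc a T, f t ^ p ≤ ⨆ t : Icc a T, (f t + jumpSup f fm t) ^ p := by
  have : Nonempty (Icc a T) := ⟨⟨a, le_rfl, haT⟩⟩
  exact ciSup_le fun t => (Real.rpow_le_rpow (h0 t)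
    (le_add_of_nonneg_right (jumpSup_nonneg f fm t)) hp).trans
      (le_ciSup (hf.bddAbove_rpow_add_jumpSup h0 ha hp) t)

theorem jumpSup_rpow_le_iSup_rpow_add_jumpSup (hf : IsCadlag f fm) (h0 : ∀ t, 0 ≤ f t)
    {a T p : ℝ} (ha : 0 ≤ a) (haT : a ≤ T) (hp : 0 ≤ p) :
    jumpSup f fm a ^ p ≤ ⨆ t : Icc a T, (f t + jumpSup f fm t) ^ p :=
  (Real.rpow_le_rpow (jumpSup_nonneg f fm a) (le_add_of_nonneg_left (h0 a)) hp).trans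
    (le_ciSup (hf.bddAbove_rpow_add_jumpSup h0 ha hp) ⟨a, le_rfl, haT⟩)

theorem iSup_rpow_add_jumpSup_le (hf : IsCadlag f fm) (h0 : ∀ t, 0 ≤ f t) {a T p : ℝ}
    (ha : 0 ≤ a) (haT : a ≤ T) (hp : 0 < p) :
    ⨆ t : Icc a T, (f t + jumpSup f fm t) ^ p
      ≤ (2 * (⨆ t : Icc a T, f t ^ p) ^ p⁻¹ + jumpSup f fm a) ^ p := by
  have : Nonempty (Icc a T) := ⟨⟨a, le_rfl, haT⟩⟩
  set S := (⨆ t : Icc a T, f t ^ p) ^ p⁻¹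
  have hS : ∀ t ∈ Icc a T, f t ∈ Icc 0 S := fun t ht =>
    ⟨h0 t, (Real.le_rpow_inv_iff_of_pos (h0 t) (Real.iSup_nonneg fun _ =>
      Real.rpow_nonneg (h0 _) _) hp).2 (le_ciSup (hf.bddAbove_rpow h0 ha hp.le) ⟨t, ht⟩)⟩
  refine ciSup_le fun t => Real.rpow_le_rpow (add_nonneg (h0 t) (jumpSup_nonneg f fm t)) ?_ hp.le
  have := hf.jumpSup_le_add ha t.2.1 fun r hr => hS r ⟨hr.1, hr.2.trans t.2.2⟩
  linarith [(hS t t.2).2]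

end IsCadlag

/-- The right endpoint is added so that every point of `[a, b]` is approached from the right
within the set. -/
def ratIcc (a b : ℝ) : Set ℝ := insert b (Icc a b ∩ range ((↑) : ℚ → ℝ))

theorem ratIcc_countable (a b : ℝ) : (ratIcc a b).Countable :=
  ((countable_range _).mono inter_subset_right).insert b

theorem ratIcc_subset_Icc {a b : ℝ} (hab : a ≤ b) : ratIcc a b ⊆ Icc a b :=
  insert_subset ⟨hab, le_rfl⟩ inter_subset_left

theorem Icc_subset_closure_Ioo_inter_rat {x y : ℝ} (hxy : x < y) :
    Icc x y ⊆ closure (Ioo x y ∩ range ((↑) : ℚ → ℝ)) := by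
  rw [← closure_Ioo hxy.ne]
  exact closure_minimal (Rat.denseRange_cast.open_subset_closure_inter isOpen_Ioo)
    isClosed_closure

theorem mem_closure_Ici_inter_ratIcc {a b t : ℝ} (ht : t ∈ Icc a b) :
    t ∈ closure (Ici t ∩ ratIcc a b) := by
  rcases ht.2.eq_or_lt with rfl | htb
  · exact subset_closure ⟨le_refl t, mem_insert _ _⟩
  · refine closure_mono ?_ (Icc_subset_closure_Ioo_inter_rat htb ⟨le_rfl, htb.le⟩)
    exact fun u ⟨hu, hq⟩ => ⟨hu.1.le, mem_insert_of_mem _ ⟨⟨ht.1.trans hu.1.le, hu.2.le⟩, hq⟩⟩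

theorem mem_closure_Iio_inter_ratIcc {a b t : ℝ} (ht : t ∈ Ioc a b) :
    t ∈ closure (Iio t ∩ ratIcc a b) := by
  refine closure_mono ?_ (Icc_subset_closure_Ioo_inter_rat ht.1 ⟨ht.1.le, le_rfl⟩)
  exact fun u ⟨hu, hq⟩ => ⟨hu.2, mem_insert_of_mem _ ⟨⟨hu.1.le, hu.2.le.trans ht.2⟩, hq⟩⟩

theorem iSup_Icc_eq_iSup_ratIcc {g : ℝ → ℝ} {a b : ℝ} (hab : a ≤ b)
    (hg : ∀ t, ContinuousWithinAt g (Ici t) t) (hbdd : BddAbove (range fun t : Icc a b => g t)) :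
    ⨆ t : Icc a b, g t = ⨆ t : ratIcc a b, g t := by
  have : Nonempty (Icc a b) := ⟨⟨a, le_rfl, hab⟩⟩
  have : Nonempty (ratIcc a b) := ⟨⟨b, mem_insert _ _⟩⟩
  have hsub := ratIcc_subset_Icc hab
  have hbddD : BddAbove (range fun t : ratIcc a b => g t) :=
    hbdd.mono (by rintro _ ⟨t, rfl⟩; exact ⟨⟨t, hsub t.2⟩, rfl⟩)
  refine le_antisymm (ciSup_le fun t => ?_) (ciSup_le fun t => le_ciSup hbdd ⟨t, hsub t.2⟩)
  refine closure_minimal ?_ isClosed_Iic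
    (((hg t).mono inter_subset_left).mem_closure_image (mem_closure_Ici_inter_ratIcc t.2))
  rintro _ ⟨u, ⟨_, hu⟩, rfl⟩
  exact le_ciSup hbddD ⟨u, hu⟩

noncomputable def pairOscillation (f : ℝ → ℝ) (D : Set ℝ) (δ : ℝ) : ℝ :=
  ⨆ q : ((D ×ˢ D) ∩ {q : ℝ × ℝ | |q.1 - q.2| < δ} : Set (ℝ × ℝ)), |f q.1.1 - f q.1.2|

theorem IsCadlag.jumpSup_eq_iInf_pairOscillation {f fm : ℝ → ℝ} (hf : IsCadlag f fm) {a : ℝ}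
    (ha : 0 ≤ a) : jumpSup f fm a = ⨅ n : ℕ, pairOscillation f (ratIcc 0 a) (1 / (n + 1)) := by
  set D := ratIcc 0 a
  have hD : D ⊆ Icc 0 a := ratIcc_subset_Icc ha
  have hpairs : ∀ δ > (0 : ℝ), Nonempty ((D ×ˢ D) ∩ {q : ℝ × ℝ | |q.1 - q.2| < δ} : Set _) :=
    fun δ hδ => ⟨⟨(a, a), ⟨mem_insert _ _, mem_insert _ _⟩, by simpa using hδ⟩⟩
  obtain ⟨M, hM⟩ := hf.exists_bound a
  have hbdd : ∀ δ, BddAbove (range fun q : ((D ×ˢ D) ∩ {q : ℝ × ℝ | |q.1 - q.2| < δ} : Set _) =>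
      |f q.1.1 - f q.1.2|) := fun δ => ⟨M + M, forall_mem_range.2 fun q =>
    (abs_sub _ _).trans (add_le_add (hM _ (hD q.2.1.1)).1 (hM _ (hD q.2.1.2)).1)⟩
  have hle : ∀ n : ℕ, jumpSup f fm a ≤ pairOscillation f D (1 / (n + 1)) := by
    intro n
    have hδ : (0 : ℝ) < 1 / (n + 1) := Nat.one_div_pos_of_nat
    have : Nonempty (Icc 0 a) := ⟨⟨0, le_rfl, ha⟩⟩
    have := hpairs _ hδ
    refine ciSup_le fun s => ?_
    rcases s.2.1.eq_or_lt with hs | hs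
    · rw [← hs, hf.leftLim_zero, sub_self, abs_zero]
      exact Real.iSup_nonneg fun _ => abs_nonneg _
    · exact hf.abs_sub_leftLim_le hs (mem_closure_Iio_inter_ratIcc ⟨hs, s.2.2⟩)
        (mem_closure_Ici_inter_ratIcc s.2) hδ
        fun u hu v hv huv => le_ciSup (hbdd _) ⟨(u, v), ⟨hu, hv⟩, huv⟩
  refine le_antisymm (le_ciInf hle) (le_of_forall_pos_le_add fun ε hε => ?_)
  obtain ⟨δ, hδ, hosc⟩ := hf.exists_abs_sub_le_jumpSup_add (a := a) hε
  obtain ⟨n, hn⟩ := exists_nat_one_div_lt hδ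
  have := hpairs _ (Nat.one_div_pos_of_nat (n := n))
  refine (ciInf_le ⟨_, forall_mem_range.2 hle⟩ n).trans (ciSup_le fun q => ?_)
  exact hosc _ (hD q.2.1.1) _ (hD q.2.1.2) (q.2.2.trans hn)

section Measurability

variable {Ω : Type*} {m : MeasurableSpace Ω}

theorem measurable_iSup_Icc {X : ℝ → Ω → ℝ} {a b : ℝ} (hab : a ≤ b)
    (hX : ∀ t ∈ Icc a b, Measurable[m] (X t))
    (hrc : ∀ ω t, ContinuousWithinAt (X · ω) (Ici t) t)
    (hbdd : ∀ ω, BddAbove (range fun t : Icc a b => X t ω)) :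
    Measurable[m] fun ω => ⨆ t : Icc a b, X t ω := by
  simp_rw [iSup_Icc_eq_iSup_ratIcc hab (hrc _) (hbdd _)]
  have := (ratIcc_countable a b).to_subtype
  exact Measurable.iSup fun t => hX t (ratIcc_subset_Icc hab t.2)

theorem measurable_jumpSup {X Xm : ℝ → Ω → ℝ} {a : ℝ} (ha : 0 ≤ a)
    (hX : ∀ t ∈ Icc 0 a, Measurable[m] (X t)) (hcadlag : ∀ ω, IsCadlag (X · ω) (Xm · ω)) :
    Measurable[m] fun ω => jumpSup (X · ω) (Xm · ω) a := by
  simp_rw [(hcadlag _).jumpSup_eq_iInf_pairOscillation ha, pairOscillation]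
  have hD := ratIcc_subset_Icc ha
  refine Measurable.iInf fun n => ?_
  have : Countable ((ratIcc 0 a ×ˢ ratIcc 0 a) ∩ {q : ℝ × ℝ | |q.1 - q.2| < 1 / (n + 1)} :
      Set _) := (((ratIcc_countable 0 a).prod (ratIcc_countable 0 a)).mono
        inter_subset_left).to_subtype
  exact Measurable.iSup fun q => ((hX _ (hD q.2.1.1)).sub (hX _ (hD q.2.1.2))).abs

end Measurability

theorem condExp_iSup_smBar_le {Ω : Type*} [m0 : MeasurableSpace Ω] {P : Measure Ω}
    [IsFiniteMeasure P] {ℱ : ℝ → MeasurableSpace Ω} (hℱle : ∀ t, ℱ t ≤ m0)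
    (hℱmono : Monotone ℱ) {T p : ℝ} (hp : 1 ≤ p) {Φ Φm : ℝ → Ω → ℝ} (hΦ0 : ∀ t ω, 0 ≤ Φ t ω)
    (hΦad : ∀ t, Measurable[ℱ t] (Φ t)) (hΦ : ∀ ω, IsCadlag (Φ · ω) (Φm · ω)) {a c : ℝ}
    (ha : a ∈ Icc 0 T) (hc : 0 ≤ c)
    (hF : P[fun ω => ⨆ t : Icc a T, Φ t ω ^ p | ℱ a] ≤ᵐ[P] fun ω => c ^ p * Φ a ω ^ p) :
    P[fun ω => ⨆ t : Icc a T, smBar Φ Φm t ω ^ p | ℱ a]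
      ≤ᵐ[P] fun ω => (2 * c * Φ a ω + jumpSup (Φ · ω) (Φm · ω) a) ^ p := by
  have hp0 : 0 < p := by linarith
  set F := fun ω => ⨆ t : Icc a T, Φ t ω ^ p
  set J := fun ω => jumpSup (Φ · ω) (Φm · ω) a
  set G := fun ω => ⨆ t : Icc a T, smBar Φ Φm t ω ^ p
  have hF0 : ∀ ω, 0 ≤ F ω := fun ω => Real.iSup_nonneg fun _ => Real.rpow_nonneg (hΦ0 _ _) _
  have hJ0 : ∀ ω, 0 ≤ J ω := fun ω => jumpSup_nonneg _ _ a
  have hB0 : ∀ ω, 0 ≤ 2 * c * Φ a ω := fun ω => by have := hΦ0 a ω; positivity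
  by_cases hG : Integrable G P
  swap
  · rw [condExp_of_not_integrable hG]
    exact ae_of_all _ fun ω => Real.rpow_nonneg (add_nonneg (hB0 ω) (hJ0 ω)) _
  have hFm : Measurable F := measurable_iSup_Icc ha.2
    (fun t _ => ((hΦad t).mono (hℱle t) le_rfl).pow_const p)
    (fun ω t => ((hΦ ω).continuousWithinAt_Ici t).rpow_const (Or.inr hp0.le))
    (fun ω => (hΦ ω).bddAbove_rpow (hΦ0 · ω) ha.1 hp0.le)
  have hJm : Measurable[ℱ a] J :=
    measurable_jumpSup ha.1 (fun t ht => (hΦad t).mono (hℱmono ht.2) le_rfl) hΦ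
  have hFint : Integrable F P := hG.mono_nonneg hFm.aestronglyMeasurable (ae_of_all _ hF0)
    (ae_of_all _ fun ω => (hΦ ω).iSup_rpow_le_iSup_rpow_add_jumpSup (hΦ0 · ω) ha.1 ha.2 hp0.le)
  have hJint : Integrable (fun ω => J ω ^ p) P :=
    hG.mono_nonneg ((hJm.mono (hℱle a) le_rfl).pow_const p).aestronglyMeasurable
      (ae_of_all _ fun ω => Real.rpow_nonneg (hJ0 ω) _) (ae_of_all _ fun ω =>
        (hΦ ω).jumpSup_rpow_le_iSup_rpow_add_jumpSup (hΦ0 · ω) ha.1 ha.2 hp0.le)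
  have hXp : (fun ω => (2 * F ω ^ p⁻¹) ^ p) = (2 : ℝ) ^ p • F := funext fun ω => by
    rw [Pi.smul_apply, smul_eq_mul, Real.mul_rpow zero_le_two (Real.rpow_nonneg (hF0 ω) _),
      Real.rpow_inv_rpow (hF0 ω) hp0.ne']
  have hXB : P[fun ω => (2 * F ω ^ p⁻¹) ^ p | ℱ a] ≤ᵐ[P] fun ω => (2 * c * Φ a ω) ^ p := by
    rw [hXp]
    filter_upwards [condExp_smul (m := ℱ a) ((2 : ℝ) ^ p) F, hF] with ω hsmul hcF
    rw [hsmul, Pi.smul_apply, smul_eq_mul, Real.mul_rpow (by positivity) (hΦ0 a ω),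
      Real.mul_rpow zero_le_two hc, mul_assoc]
    gcongr
  exact condExp_le_add_rpow (hℱle a) hp
    (fun ω => mul_nonneg zero_le_two (Real.rpow_nonneg (hF0 ω) _)) hJ0 hB0
    (fun ω => (hΦ ω).iSup_rpow_add_jumpSup_le (hΦ0 · ω) ha.1 ha.2 hp0) hG
    (hXp ▸ hFint.smul _) hJint hJm hXB

theorem smBar_mem_smSet {Ω : Type*} [m0 : MeasurableSpace Ω] {P : Measure Ω}
    [IsFiniteMeasure P] {ℱ : ℝ → MeasurableSpace Ω} (hℱle : ∀ t, ℱ t ≤ m0)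
    (hℱmono : Monotone ℱ) {T p : ℝ} (hp : 1 ≤ p) {Φ Φm : ℝ → Ω → ℝ} (hΦ0 : ∀ t ω, 0 ≤ Φ t ω)
    (hΦad : ∀ t, Measurable[ℱ t] (Φ t)) (hΦ : ∀ ω, IsCadlag (Φ · ω) (Φm · ω)) {c : ℝ}
    (hc : c ∈ smSet P ℱ T p Φ) : 3 * c + 1 ∈ smSet P ℱ T p (smBar Φ Φm) := by
  have hc0 : 0 ≤ c := hc.1
  refine ⟨by linarith, fun a ha => ?_⟩
  filter_upwards [condExp_iSup_smBar_le hℱle hℱmono hp hΦ0 hΦad hΦ ha hc0 (hc.2 a ha)]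
    with ω hω
  have hΦa := hΦ0 a ω
  have hJa := jumpSup_nonneg (Φ · ω) (Φm · ω) a
  rw [smBar_eq_add_jumpSup, ← Real.mul_rpow (by linarith) (add_nonneg hΦa hJa)]
  exact hω.trans (Real.rpow_le_rpow (by positivity) (by nlinarith) (by linarith))

theorem stmt_6_general {Ω : Type*} [m0 : MeasurableSpace Ω] (P : Measure Ω) [IsProbabilityMeasure P]
    (ℱ : ℝ → MeasurableSpace Ω) (hℱle : ∀ t, ℱ t ≤ m0) (hℱmono : Monotone ℱ)
    (T p : ℝ) (hp : 1 ≤ p)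
    (Φ Φm : ℝ → Ω → ℝ)
    (hΦ0 : ∀ t ω, 0 ≤ Φ t ω)
    (hΦad : ∀ t, Measurable[ℱ t] (Φ t))
    (hΦrc : ∀ ω t, ContinuousWithinAt (fun s => Φ s ω) (Set.Ici t) t)
    (hΦll : ∀ ω t, 0 < t →
      Filter.Tendsto (fun s => Φ s ω) (nhdsWithin t (Set.Iio t)) (nhds (Φm t ω)))
    (hΦll0 : ∀ ω, Φm 0 ω = Φ 0 ω)
    (hΦmem : (smSet P ℱ T p Φ).Nonempty) :
    (smSet P ℱ T p (smBar Φ Φm)).Nonempty ∧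
    smNorm P ℱ T p (smBar Φ Φm) ≤ 3 * smNorm P ℱ T p Φ + 1 := by
  have hmem : (fun c => 3 * c + 1) '' smSet P ℱ T p Φ ⊆ smSet P ℱ T p (smBar Φ Φm) :=
    image_subset_iff.2 fun _ hc => smBar_mem_smSet hℱle hℱmono hp hΦ0 hΦad
      (fun ω => ⟨hΦrc ω, hΦll ω, hΦll0 ω⟩) hc
  refine ⟨(hΦmem.image _).mono hmem, ?_⟩
  calc smNorm P ℱ T p (smBar Φ Φm)
      ≤ sInf ((fun c => 3 * c + 1) '' smSet P ℱ T p Φ) :=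
        csInf_le_csInf ⟨0, fun _ hc => hc.1⟩ (hΦmem.image _) hmem
    _ = 3 * smNorm P ℱ T p Φ + 1 :=
        (Monotone.map_csInf_of_continuousAt (by fun_prop) (fun _ _ h => by linarith) hΦmem
          ⟨0, fun _ hc => hc.1⟩).symm

theorem stmt_6 {Ω : Type*} [m0 : MeasurableSpace Ω] (P : Measure Ω) [IsProbabilityMeasure P]
    (ℱ : ℝ → MeasurableSpace Ω) (hℱle : ∀ t, ℱ t ≤ m0) (hℱmono : Monotone ℱ)
    (T p : ℝ) (hT : 0 < T) (hp : 1 ≤ p)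
    (Φ Φm : ℝ → Ω → ℝ)
    (hΦ0 : ∀ t ω, 0 ≤ Φ t ω)
    (hΦad : ∀ t, Measurable[ℱ t] (Φ t))
    (hΦrc : ∀ ω t, ContinuousWithinAt (fun s => Φ s ω) (Set.Ici t) t)
    (hΦll : ∀ ω t, 0 < t →
      Filter.Tendsto (fun s => Φ s ω) (nhdsWithin t (Set.Iio t)) (nhds (Φm t ω)))
    (hΦll0 : ∀ ω, Φm 0 ω = Φ 0 ω)
    (hΦmem : (smSet P ℱ T p Φ).Nonempty) :
    (smSet P ℱ T p (smBar Φ Φm)).Nonempty ∧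
    smNorm P ℱ T p (smBar Φ Φm) ≤ 3 * smNorm P ℱ T p Φ + 1 :=
  stmt_6_general (m0 := m0) P ℱ hℱle hℱmono T p hp Φ Φm hΦ0 hΦad hΦrc hΦll hΦll0 hΦmem
end

section
/- Let Y be a real random variable whose law has a continuously differentiable density p on ℝ with p' ∈ L¹(ℝ), and suppose p is non-decreasing on (−∞, m) and non-increasing on (m, ∞) for some m ∈ ℝ (i.e. the law is unimodal with mode m). If additionally e^x p(x) → 0 as |x| → ∞ and E[e^Y] < ∞, then ∫_ℝ |e^x − e^m| · |p'(x)| dx = E[e^Y]. In particular, inf_{κ > 0} ∫_ℝ |e^x − κ| · |p'(x)| dx ≤ E[e^Y]. -/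
/-!
Put `G x = (e^m - e^x) p(x) + ∫_{-∞}^x e^t p(t) dt`, so that `G' = (e^m - e^x) p'`. Unimodality
makes `(e^m - e^x) p'(x) = |e^x - e^m| |p'(x)| ≥ 0`, and the decay of `p` and `e^x p` at `±∞`
gives `G → 0` at `-∞` and `G → E[e^Y]` at `+∞`; a nonnegative derivative of a function with limits
at both ends is integrable, with integral the difference of the limits.
-/

open MeasureTheory Set Filter Topology

section UnimodalDeriv

variable {f : ℝ → ℝ} {f' a x : ℝ}

theorem HasDerivAt.nonneg_of_monotoneOn_Iic (hd : HasDerivAt f f' x)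
    (hf : MonotoneOn f (Iic a)) (hx : x ≤ a) : 0 ≤ f' := by
  refine hd.hasDerivWithinAt.nonneg_of_monotoneOn ?_ hf
  rw [accPt_principal_iff_nhdsWithin]
  exact (nhdsLT_neBot x).mono <|
    nhdsWithin_mono x fun y hy => ⟨(le_of_lt hy).trans hx, ne_of_lt hy⟩

theorem HasDerivAt.nonpos_of_antitoneOn_Ici (hd : HasDerivAt f f' x)
    (hf : AntitoneOn f (Ici a)) (hx : a ≤ x) : f' ≤ 0 := by
  refine hd.hasDerivWithinAt.nonpos_of_antitoneOn ?_ hf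
  rw [accPt_principal_iff_nhdsWithin]
  exact (nhdsGT_neBot x).mono <|
    nhdsWithin_mono x fun y hy => ⟨hx.trans (le_of_lt hy), ne_of_gt hy⟩

end UnimodalDeriv

theorem sub_mul_deriv_nonneg_of_unimodal {φ p : ℝ → ℝ} {d m x : ℝ} (hφ : Monotone φ)
    (hmono : MonotoneOn p (Iic m)) (hanti : AntitoneOn p (Ici m)) (hd : HasDerivAt p d x) :
    0 ≤ (φ m - φ x) * d := by
  rcases le_total x m with hx | hx
  · exact mul_nonneg (sub_nonneg.2 (hφ hx)) (hd.nonneg_of_monotoneOn_Iic hmono hx)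
  · exact mul_nonneg_of_nonpos_of_nonpos (sub_nonpos.2 (hφ hx))
      (hd.nonpos_of_antitoneOn_Ici hanti hx)

theorem exists_hasDerivAt_tendsto_integral {f : ℝ → ℝ} (hcont : Continuous f)
    (hint : Integrable f) :
    ∃ F : ℝ → ℝ, (∀ x, HasDerivAt F (f x) x) ∧ Tendsto F atBot (𝓝 0) ∧
      Tendsto F atTop (𝓝 (∫ x, f x)) := by
  refine ⟨fun x => (∫ t in Iic 0, f t) + ∫ t in 0..x, f t, fun x => ?_, ?_, ?_⟩
  · exact (intervalIntegral.integral_hasDerivAt_right hint.intervalIntegrable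
      hcont.stronglyMeasurable.stronglyMeasurableAtFilter hcont.continuousAt).const_add _
  · have h := (intervalIntegral_tendsto_integral_Iic 0 hint.integrableOn tendsto_id).neg
      |>.const_add (∫ t in Iic 0, f t)
    rw [add_neg_cancel] at h
    refine h.congr fun x => ?_
    rw [id, intervalIntegral.integral_symm 0 x, neg_neg]
  · rw [← intervalIntegral.integral_Iic_add_Ioi hint.integrableOn hint.integrableOn]
    exact (intervalIntegral_tendsto_integral_Ioi 0 hint.integrableOn tendsto_id).const_add _

theorem integrable_deriv_of_nonneg {g g' : ℝ → ℝ} {a b : ℝ}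
    (hderiv : ∀ x, HasDerivAt g (g' x) x)
    (hg' : ∀ x, 0 ≤ g' x) (hbot : Tendsto g atBot (𝓝 a)) (htop : Tendsto g atTop (𝓝 b)) :
    Integrable g' := by
  have hcont : Continuous g := continuous_iff_continuousAt.2 fun x => (hderiv x).continuousAt
  refine integrable_of_intervalIntegral_norm_tendsto (b - a)
    (fun i => intervalIntegral.integrableOn_deriv_of_nonneg hcont.continuousOn
      (fun x _ => hderiv x) fun x _ => hg' x) tendsto_neg_atTop_atBot tendsto_id ?_
  refine ((htop.comp tendsto_id).sub (hbot.comp tendsto_neg_atTop_atBot)).congr' ?_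
  filter_upwards [eventually_ge_atTop 0] with i hi
  have hle : -i ≤ id i := neg_le_self hi
  simp_rw [Real.norm_of_nonneg (hg' _)]
  exact (intervalIntegral.integral_eq_sub_of_hasDerivAt_of_le hle hcont.continuousOn
    (fun x _ => hderiv x) (intervalIntegral.intervalIntegrable_deriv_of_nonneg
      hcont.continuousOn (fun x _ => hderiv x) fun x _ => hg' x)).symm

theorem integral_sub_mul_deriv_eq_of_nonneg {φ φ' p p' : ℝ → ℝ} (c : ℝ)
    (hφ : ∀ x, HasDerivAt φ (φ' x) x) (hp : ∀ x, HasDerivAt p (p' x) x)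
    (hcont : Continuous fun x => φ' x * p x) (hint : Integrable fun x => φ' x * p x)
    (hp_bot : Tendsto p atBot (𝓝 0)) (hp_top : Tendsto p atTop (𝓝 0))
    (hφp_bot : Tendsto (fun x => φ x * p x) atBot (𝓝 0))
    (hφp_top : Tendsto (fun x => φ x * p x) atTop (𝓝 0))
    (hsign : ∀ x, 0 ≤ (c - φ x) * p' x) :
    ∫ x, (c - φ x) * p' x = ∫ x, φ' x * p x := by
  obtain ⟨F, hF, hF_bot, hF_top⟩ := exists_hasDerivAt_tendsto_integral hcont hint
  set G : ℝ → ℝ := fun x => (c - φ x) * p x + F x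
  have hG : ∀ x, HasDerivAt G ((c - φ x) * p' x) x := fun x =>
    ((((hφ x).const_sub c).mul (hp x)).add (hF x)).congr_deriv (by ring)
  have hboundary : ∀ l : Filter ℝ, Tendsto p l (𝓝 0) → Tendsto (fun x => φ x * p x) l (𝓝 0) →
      Tendsto (fun x => (c - φ x) * p x) l (𝓝 0) := fun l h₁ h₂ => by
    simpa [sub_mul] using (h₁.const_mul c).sub h₂
  have hG_bot : Tendsto G atBot (𝓝 0) := by
    simpa using (hboundary _ hp_bot hφp_bot).add hF_bot
  have hG_top : Tendsto G atTop (𝓝 (∫ x, φ' x * p x)) := by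
    simpa using (hboundary _ hp_top hφp_top).add hF_top
  rw [integral_of_hasDerivAt_of_tendsto hG (integrable_deriv_of_nonneg hG hsign hG_bot hG_top)
    hG_bot hG_top, sub_zero]

theorem stmt_9_general (p p' : ℝ → ℝ) (m : ℝ)
    (hp1 : ∫ x, p x = 1)
    (hderiv : ∀ x, HasDerivAt p (p' x) x)
    (hp'int : Integrable p')
    (hmono : MonotoneOn p (Set.Iic m)) (hanti : AntitoneOn p (Set.Ici m))
    (htail_top : Filter.Tendsto (fun x => Real.exp x * p x) Filter.atTop (nhds 0))
    (htail_bot : Filter.Tendsto (fun x => Real.exp x * p x) Filter.atBot (nhds 0))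
    (hexp : Integrable (fun x => Real.exp x * p x)) :
    (∫ x, |Real.exp x - Real.exp m| * |p' x|) = ∫ x, Real.exp x * p x ∧
    (⨅ κ : Set.Ioi (0 : ℝ), ∫ x, |Real.exp x - κ.1| * |p' x|) ≤ ∫ x, Real.exp x * p x := by
  have hp_int : Integrable p := Integrable.of_integral_ne_zero (by rw [hp1]; exact one_ne_zero)
  have hp_bot := tendsto_zero_of_hasDerivAt_of_integrableOn_Iic (a := 0) (fun x _ => hderiv x)
    hp'int.integrableOn hp_int.integrableOn
  have hp_top := tendsto_zero_of_hasDerivAt_of_integrableOn_Ioi (a := 0) (fun x _ => hderiv x)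
    hp'int.integrableOn hp_int.integrableOn
  have hp_cont : Continuous p := continuous_iff_continuousAt.2 fun x => (hderiv x).continuousAt
  have hsign x : 0 ≤ (Real.exp m - Real.exp x) * p' x :=
    sub_mul_deriv_nonneg_of_unimodal Real.exp_monotone hmono hanti (hderiv x)
  have key : ∫ x, |Real.exp x - Real.exp m| * |p' x| = ∫ x, Real.exp x * p x := by
    simp_rw [abs_sub_comm _ (Real.exp m), ← abs_mul, abs_of_nonneg (hsign _)]
    exact integral_sub_mul_deriv_eq_of_nonneg _ Real.hasDerivAt_exp hderiv
      (Real.continuous_exp.mul hp_cont) hexp hp_bot hp_top htail_bot htail_top hsign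
  refine ⟨key, key ▸ ciInf_le ⟨0, ?_⟩ (⟨Real.exp m, Real.exp_pos m⟩ : Set.Ioi (0 : ℝ))⟩
  rintro _ ⟨κ, rfl⟩
  exact integral_nonneg fun x => by positivity

theorem stmt_9 (p p' : ℝ → ℝ) (m : ℝ)
    (hp0 : ∀ x, 0 ≤ p x) (hp1 : ∫ x, p x = 1)
    (hderiv : ∀ x, HasDerivAt p (p' x) x) (hp'cont : Continuous p')
    (hp'int : Integrable p')
    (hmono : MonotoneOn p (Set.Iic m)) (hanti : AntitoneOn p (Set.Ici m))
    (htail_top : Filter.Tendsto (fun x => Real.exp x * p x) Filter.atTop (nhds 0))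
    (htail_bot : Filter.Tendsto (fun x => Real.exp x * p x) Filter.atBot (nhds 0))
    (hexp : Integrable (fun x => Real.exp x * p x)) :
    (∫ x, |Real.exp x - Real.exp m| * |p' x|) = ∫ x, Real.exp x * p x ∧
    (⨅ κ : Set.Ioi (0 : ℝ), ∫ x, |Real.exp x - κ.1| * |p' x|) ≤ ∫ x, Real.exp x * p x :=
  stmt_9_general p p' m hp1 hderiv hp'int hmono hanti htail_top htail_bot hexp
end

section
/- Let η ∈ [0,1), β ∈ (1+η, 2], and let ℓ be a Lévy measure on ℝ (a Borel measure with ℓ({0})=0 and ∫(x²∧1) dℓ < ∞). If sup_{r∈(0,1)} r^β ℓ({x : r < |x| ≤ 1}) < ∞, then sup_{r∈(0,1]} r^β ∫_{|x| ≤ 1} (|x/r|² ∧ |x/r|^{η+1}) dℓ(x) < ∞. Conversely, the latter finiteness implies the former, so the two conditions are equivalent. -/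
/-!
Write `M = sup_{s ∈ (0,1)} s^β ℓ{s < |x| ≤ 1}`. Cut `{0 < |x| ≤ 1}` into the dyadic annuli
`r 2^t < |x| ≤ r 2^(t+1)`. On such an annulus `|x/r|^p ≤ 2^((t+1)p)`, and its mass is at most
`ℓ{r 2^t < |x| ≤ 1} ≤ M (r 2^t)^(-β)`, so it contributes at most `2^(p + (p-β)t) M` to
`r^β ∫ |x/r|^p dℓ`. Summing over `t = 0, 1, …` with `p = η + 1 < β` bounds the part
`r < |x| ≤ 1`, and summing over `t = -1, -2, …` with `p = 2 > β` bounds the part `|x| ≤ r`.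
At `β = 2` the second series diverges; there `r^2 ∫_{|x| ≤ r} |x/r|^2 dℓ = ∫_{|x| ≤ r} x^2 dℓ`
is bounded by the Lévy integral instead. The converse holds because the integrand is `≥ 1`
on `{r < |x| ≤ 1}`.
-/

open MeasureTheory Set

open scoped ENNReal

lemma tsum_ofReal_two_rpow_lt_top (a : ℝ) {b : ℝ} (hb : b < 0) :
    ∑' k : ℕ, ENNReal.ofReal (2 ^ (a + b * k)) < ∞ := by
  have hterm (k : ℕ) : ENNReal.ofReal (2 ^ (a + b * k))
      = ENNReal.ofReal (2 ^ b) ^ k * ENNReal.ofReal (2 ^ a) := by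
    rw [← ENNReal.ofReal_pow (by positivity), ← ENNReal.ofReal_mul (by positivity),
      ← Real.rpow_mul_natCast zero_le_two, ← Real.rpow_add two_pos, add_comm]
  have hratio : ENNReal.ofReal (2 ^ b) < 1 :=
    ENNReal.ofReal_lt_one.2 (Real.rpow_lt_one_of_one_lt_of_neg one_lt_two hb)
  simp_rw [hterm, ENNReal.tsum_mul_right, ENNReal.tsum_geometric]
  exact ENNReal.mul_lt_top (ENNReal.inv_lt_top.2 (tsub_pos_of_lt hratio)) ENNReal.ofReal_lt_top

lemma exists_int_two_rpow_lt_le {r y : ℝ} (hr : 0 < r) (hy : 0 < y) :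
    ∃ n : ℤ, r * 2 ^ (n : ℝ) < y ∧ y ≤ r * 2 ^ ((n : ℝ) + 1) := by
  obtain ⟨n, hn⟩ := exists_mem_Ioc_zpow (div_pos hy hr) one_lt_two
  refine ⟨n, ?_, ?_⟩
  · rw [Real.rpow_intCast, ← lt_div_iff₀' hr]
    exact hn.1
  · rw [← Int.cast_one, ← Int.cast_add, Real.rpow_intCast, ← div_le_iff₀' hr]
    exact hn.2

def dyadicAnnulus (r t : ℝ) : Set ℝ := {x | r * 2 ^ t < |x| ∧ |x| ≤ min 1 (r * 2 ^ (t + 1))}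

lemma measurableSet_lt_abs_le (a b : ℝ) : MeasurableSet {x : ℝ | a < |x| ∧ |x| ≤ b} :=
  (measurableSet_lt measurable_const continuous_abs.measurable).inter
    (measurableSet_le continuous_abs.measurable measurable_const)

lemma subset_iUnion_dyadicAnnulus_of_lt {r : ℝ} (hr : 0 < r) :
    {x : ℝ | r < |x| ∧ |x| ≤ 1} ⊆ ⋃ k : ℕ, dyadicAnnulus r k := by
  rintro x ⟨hrx, hx1⟩
  obtain ⟨n, hlt, hle⟩ := exists_int_two_rpow_lt_le hr (hr.trans hrx)
  have hn : 0 ≤ n := by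
    by_contra! hn
    have : (2 : ℝ) ^ ((n : ℝ) + 1) ≤ 1 :=
      Real.rpow_le_one_of_one_le_of_nonpos one_le_two (by exact_mod_cast hn)
    nlinarith
  lift n to ℕ using hn
  exact mem_iUnion.2 ⟨n, by exact_mod_cast hlt, le_min hx1 (by exact_mod_cast hle)⟩

lemma subset_union_iUnion_dyadicAnnulus_of_le {r : ℝ} (hr : 0 < r) (hr1 : r ≤ 1) :
    {x : ℝ | |x| ≤ r} ⊆ {0} ∪ ⋃ k : ℕ, dyadicAnnulus r (-(k + 1)) := by
  intro x hxr
  rcases eq_or_ne x 0 with rfl | hx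
  · exact Or.inl rfl
  obtain ⟨n, hlt, hle⟩ := exists_int_two_rpow_lt_le hr (abs_pos.2 hx)
  have hn : n < 0 := by
    by_contra! hn
    have : (1 : ℝ) ≤ 2 ^ (n : ℝ) := Real.one_le_rpow one_le_two (by exact_mod_cast hn)
    nlinarith [hxr.out]
  obtain ⟨k, rfl⟩ : ∃ k : ℕ, n = -(k + 1) := ⟨(-n - 1).toNat, by omega⟩
  refine Or.inr (mem_iUnion.2 ⟨k, by exact_mod_cast hlt, le_min (hxr.out.trans hr1) ?_⟩)
  exact_mod_cast hle

def HasTailBound (ℓ : Measure ℝ) (β : ℝ) (M : ℝ≥0∞) : Prop :=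
  ∀ s : ℝ, 0 < s → s < 1 → ENNReal.ofReal (s ^ β) * ℓ {x | s < |x| ∧ |x| ≤ 1} ≤ M

namespace HasTailBound

variable {ℓ : Measure ℝ} {β : ℝ} {M : ℝ≥0∞}

lemma ofReal_rpow_mul_measure_le (hM : HasTailBound ℓ β M) {s : ℝ} (hs : 0 < s) :
    ENNReal.ofReal (s ^ β) * ℓ {x | s < |x| ∧ |x| ≤ 1} ≤ M := by
  rcases lt_or_ge s 1 with hs1 | hs1
  · exact hM s hs hs1
  · have hempty : {x : ℝ | s < |x| ∧ |x| ≤ 1} = ∅ :=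
      eq_empty_of_forall_notMem fun x ⟨h1, h2⟩ => by linarith
    simp [hempty]

lemma ofReal_rpow_mul_setLIntegral_dyadicAnnulus_le (hM : HasTailBound ℓ β M) {r p : ℝ}
    (hr : 0 < r) (hp : 0 ≤ p) (t : ℝ) :
    ENNReal.ofReal (r ^ β) * ∫⁻ x in dyadicAnnulus r t, ENNReal.ofReal (|x / r| ^ p) ∂ℓ
      ≤ ENNReal.ofReal (2 ^ (p + (p - β) * t)) * M := by
  have hintegrand : ∀ x ∈ dyadicAnnulus r t,
      ENNReal.ofReal (|x / r| ^ p) ≤ ENNReal.ofReal (2 ^ ((t + 1) * p)) := by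
    rintro x ⟨-, hx⟩
    have hxr : |x / r| ≤ 2 ^ (t + 1) := by
      rw [abs_div, abs_of_pos hr, div_le_iff₀' hr]
      exact hx.trans (min_le_right _ _)
    rw [Real.rpow_mul zero_le_two]
    exact ENNReal.ofReal_le_ofReal (Real.rpow_le_rpow (abs_nonneg _) hxr hp)
  have hscale : ENNReal.ofReal (r ^ β)
      = ENNReal.ofReal (2 ^ (-β * t)) * ENNReal.ofReal ((r * 2 ^ t) ^ β) := by
    rw [← ENNReal.ofReal_mul (by positivity), Real.mul_rpow hr.le (by positivity),
      ← Real.rpow_mul zero_le_two, mul_left_comm, ← Real.rpow_add two_pos]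
    simp [mul_comm t β]
  have htail : ENNReal.ofReal ((r * 2 ^ t) ^ β) * ℓ (dyadicAnnulus r t) ≤ M :=
    le_trans (by gcongr; exact fun x hx => ⟨hx.1, hx.2.trans (min_le_left _ _)⟩)
      (hM.ofReal_rpow_mul_measure_le (by positivity))
  calc ENNReal.ofReal (r ^ β) * ∫⁻ x in dyadicAnnulus r t, ENNReal.ofReal (|x / r| ^ p) ∂ℓ
      ≤ ENNReal.ofReal (r ^ β) * (ENNReal.ofReal (2 ^ ((t + 1) * p)) * ℓ (dyadicAnnulus r t)) := by
        rw [← setLIntegral_const]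
        exact mul_le_mul_right (setLIntegral_mono' (measurableSet_lt_abs_le _ _) hintegrand) _
    _ = ENNReal.ofReal (2 ^ ((t + 1) * p)) * ENNReal.ofReal (2 ^ (-β * t))
          * (ENNReal.ofReal ((r * 2 ^ t) ^ β) * ℓ (dyadicAnnulus r t)) := by
        rw [hscale]; ring
    _ ≤ ENNReal.ofReal (2 ^ ((t + 1) * p)) * ENNReal.ofReal (2 ^ (-β * t)) * M := by
        gcongr
    _ = ENNReal.ofReal (2 ^ (p + (p - β) * t)) * M := by
        rw [← ENNReal.ofReal_mul (by positivity), ← Real.rpow_add two_pos]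
        ring_nf

lemma ofReal_rpow_mul_setLIntegral_le_tsum (hM : HasTailBound ℓ β M) {r p : ℝ} (hr : 0 < r)
    (hp : 0 ≤ p) {s : Set ℝ} {t : ℕ → ℝ} (hs : s ⊆ ⋃ k, dyadicAnnulus r (t k)) :
    ENNReal.ofReal (r ^ β) * ∫⁻ x in s, ENNReal.ofReal (|x / r| ^ p) ∂ℓ
      ≤ (∑' k, ENNReal.ofReal (2 ^ (p + (p - β) * t k))) * M :=
  calc ENNReal.ofReal (r ^ β) * ∫⁻ x in s, ENNReal.ofReal (|x / r| ^ p) ∂ℓ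
      ≤ ENNReal.ofReal (r ^ β)
          * ∑' k, ∫⁻ x in dyadicAnnulus r (t k), ENNReal.ofReal (|x / r| ^ p) ∂ℓ :=
        mul_le_mul_right ((lintegral_mono_set hs).trans (lintegral_iUnion_le _ _)) _
    _ = ∑' k, ENNReal.ofReal (r ^ β)
          * ∫⁻ x in dyadicAnnulus r (t k), ENNReal.ofReal (|x / r| ^ p) ∂ℓ :=
        ENNReal.tsum_mul_left.symm
    _ ≤ ∑' k, ENNReal.ofReal (2 ^ (p + (p - β) * t k)) * M :=
        ENNReal.tsum_le_tsum fun _ => hM.ofReal_rpow_mul_setLIntegral_dyadicAnnulus_le hr hp _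
    _ = (∑' k, ENNReal.ofReal (2 ^ (p + (p - β) * t k))) * M := ENNReal.tsum_mul_right

lemma ofReal_rpow_mul_setLIntegral_tail_le (hM : HasTailBound ℓ β M) {r p : ℝ} (hr : 0 < r)
    (hp : 0 ≤ p) :
    ENNReal.ofReal (r ^ β) * ∫⁻ x in {x | r < |x| ∧ |x| ≤ 1}, ENNReal.ofReal (|x / r| ^ p) ∂ℓ
      ≤ (∑' k : ℕ, ENNReal.ofReal (2 ^ (p + (p - β) * k))) * M :=
  hM.ofReal_rpow_mul_setLIntegral_le_tsum hr hp (subset_iUnion_dyadicAnnulus_of_lt hr)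

lemma ofReal_rpow_mul_setLIntegral_core_le (hM : HasTailBound ℓ β M) {r q : ℝ} (hr : 0 < r)
    (hr1 : r ≤ 1) (hq : 0 < q) :
    ENNReal.ofReal (r ^ β) * ∫⁻ x in {x | |x| ≤ r}, ENNReal.ofReal (|x / r| ^ q) ∂ℓ
      ≤ (∑' k : ℕ, ENNReal.ofReal (2 ^ (β + (β - q) * k))) * M := by
  have hzero : ∫⁻ x in {0}, ENNReal.ofReal (|x / r| ^ q) ∂ℓ = 0 := by
    simp [Real.zero_rpow hq.ne']
  have hexp (k : ℕ) : q + (q - β) * (-((k : ℝ) + 1)) = β + (β - q) * k := by ring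
  calc ENNReal.ofReal (r ^ β) * ∫⁻ x in {x | |x| ≤ r}, ENNReal.ofReal (|x / r| ^ q) ∂ℓ
      ≤ ENNReal.ofReal (r ^ β) * ∫⁻ x in ⋃ k : ℕ, dyadicAnnulus r (-(k + 1)),
          ENNReal.ofReal (|x / r| ^ q) ∂ℓ := by
        refine mul_le_mul_right ?_ _
        refine (lintegral_mono_set (subset_union_iUnion_dyadicAnnulus_of_le hr hr1)).trans ?_
        exact (lintegral_union_le _ _ _).trans (by rw [hzero, zero_add])
    _ ≤ (∑' k : ℕ, ENNReal.ofReal (2 ^ (β + (β - q) * k))) * M := by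
        simpa only [hexp] using hM.ofReal_rpow_mul_setLIntegral_le_tsum hr hq.le
          (t := fun k : ℕ => -((k : ℝ) + 1)) subset_rfl

end HasTailBound

lemma ofReal_sq_mul_setLIntegral_core_le_lintegral {ℓ : Measure ℝ} {r : ℝ} (hr : 0 < r)
    (hr1 : r ≤ 1) :
    ENNReal.ofReal (r ^ (2 : ℝ)) * ∫⁻ x in {x | |x| ≤ r}, ENNReal.ofReal (|x / r| ^ (2 : ℝ)) ∂ℓ
      ≤ ∫⁻ x, ENNReal.ofReal (min (x ^ 2) 1) ∂ℓ := by
  rw [← lintegral_const_mul' _ _ ENNReal.ofReal_ne_top]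
  refine (setLIntegral_mono' (measurableSet_le continuous_abs.measurable measurable_const)
    fun x hx => ?_).trans (setLIntegral_le_lintegral _ _)
  have hx1 : x ^ 2 ≤ 1 := by nlinarith [sq_abs x, abs_nonneg x, hx.out]
  rw [← ENNReal.ofReal_mul (by positivity), Real.rpow_two, Real.rpow_two, sq_abs, div_pow,
    mul_div_cancel₀ _ (by positivity), min_eq_left hx1]

lemma measure_tail_le_setLIntegral {ℓ : Measure ℝ} {r p : ℝ} (hr : 0 < r) (hp : 0 ≤ p) :
    ℓ {x | r < |x| ∧ |x| ≤ 1}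
      ≤ ∫⁻ x in {x | |x| ≤ 1}, ENNReal.ofReal (min (|x / r| ^ 2) (|x / r| ^ p)) ∂ℓ := by
  rw [← setLIntegral_one]
  refine (setLIntegral_mono' (measurableSet_lt_abs_le r 1) fun x hx => ?_).trans
    (lintegral_mono_set fun x hx => hx.2)
  have h1 : 1 ≤ |x / r| := by
    rw [abs_div, abs_of_pos hr, one_le_div hr]
    exact hx.1.le
  exact ENNReal.one_le_ofReal.2 (le_min (one_le_pow₀ h1) (Real.one_le_rpow h1 hp))

lemma setLIntegral_ofReal_min_le_add {ℓ : Measure ℝ} (r p : ℝ) :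
    ∫⁻ x in {x | |x| ≤ 1}, ENNReal.ofReal (min (|x / r| ^ 2) (|x / r| ^ p)) ∂ℓ
      ≤ ∫⁻ x in {x | |x| ≤ r}, ENNReal.ofReal (|x / r| ^ (2 : ℝ)) ∂ℓ
        + ∫⁻ x in {x | r < |x| ∧ |x| ≤ 1}, ENNReal.ofReal (|x / r| ^ p) ∂ℓ := by
  have hcover : {x : ℝ | |x| ≤ 1} ⊆ {x | |x| ≤ r} ∪ {x | r < |x| ∧ |x| ≤ 1} :=
    fun x hx => (le_or_gt |x| r).imp id fun h => ⟨h, hx⟩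
  refine (lintegral_mono_set hcover).trans ((lintegral_union_le _ _ _).trans (add_le_add ?_ ?_))
  · refine setLIntegral_mono' (measurableSet_le continuous_abs.measurable measurable_const)
      fun x _ => ENNReal.ofReal_le_ofReal ?_
    exact (min_le_left _ _).trans_eq (Real.rpow_two _).symm
  · exact setLIntegral_mono' (measurableSet_lt_abs_le r 1)
      fun x _ => ENNReal.ofReal_le_ofReal (min_le_right _ _)

theorem stmt_11_general (η β : ℝ) (hη : η ∈ Set.Ico (0 : ℝ) 1) (hβ : β ∈ Set.Ioc (1 + η) 2)
    (ℓ : Measure ℝ)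
    (hℓlevy : ∫⁻ x, ENNReal.ofReal (min (x ^ 2) 1) ∂ℓ ≠ ⊤) :
    (⨆ r : Set.Ioo (0 : ℝ) 1,
        ENNReal.ofReal (r.1 ^ β) * ℓ {x : ℝ | r.1 < |x| ∧ |x| ≤ 1}) < ⊤ ↔
    (⨆ r : Set.Ioc (0 : ℝ) 1,
        ENNReal.ofReal (r.1 ^ β) *
          ∫⁻ x in {x : ℝ | |x| ≤ 1},
            ENNReal.ofReal (min (|x / r.1| ^ 2) (|x / r.1| ^ (η + 1))) ∂ℓ) < ⊤ := by
  obtain ⟨hη0, -⟩ := hη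
  obtain ⟨hηβ, hβ2⟩ := hβ
  constructor
  · intro hM
    set M := ⨆ r : Set.Ioo (0 : ℝ) 1, ENNReal.ofReal (r.1 ^ β) * ℓ {x : ℝ | r.1 < |x| ∧ |x| ≤ 1}
    have htail : HasTailBound ℓ β M := fun s hs hs1 =>
      le_iSup_of_le (⟨s, hs, hs1⟩ : Set.Ioo (0 : ℝ) 1) le_rfl
    obtain ⟨C, hC, hcore⟩ : ∃ C < ∞, ∀ r : ℝ, 0 < r → r ≤ 1 → ENNReal.ofReal (r ^ β)
        * ∫⁻ x in {x | |x| ≤ r}, ENNReal.ofReal (|x / r| ^ (2 : ℝ)) ∂ℓ ≤ C := by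
      rcases hβ2.lt_or_eq with hβ2 | rfl
      · exact ⟨_, ENNReal.mul_lt_top (tsum_ofReal_two_rpow_lt_top _ (by linarith)) hM,
          fun r hr hr1 => htail.ofReal_rpow_mul_setLIntegral_core_le hr hr1 two_pos⟩
      · exact ⟨_, hℓlevy.lt_top, fun r hr hr1 =>
          ofReal_sq_mul_setLIntegral_core_le_lintegral hr hr1⟩
    have hgeom := tsum_ofReal_two_rpow_lt_top (η + 1) (by linarith : η + 1 - β < 0)
    refine (iSup_le fun ⟨r, hr, hr1⟩ => ?_).trans_lt
      (ENNReal.add_lt_top.2 ⟨hC, ENNReal.mul_lt_top hgeom hM⟩)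
    calc _ ≤ ENNReal.ofReal (r ^ β)
          * (∫⁻ x in {x | |x| ≤ r}, ENNReal.ofReal (|x / r| ^ (2 : ℝ)) ∂ℓ
            + ∫⁻ x in {x | r < |x| ∧ |x| ≤ 1}, ENNReal.ofReal (|x / r| ^ (η + 1)) ∂ℓ) :=
          mul_le_mul_right (setLIntegral_ofReal_min_le_add r (η + 1)) _
      _ ≤ _ := (mul_add _ _ _).trans_le (add_le_add (hcore r hr hr1)
          (htail.ofReal_rpow_mul_setLIntegral_tail_le hr (by linarith)))
  · intro hS
    refine (iSup_le fun ⟨r, hr, hr1⟩ => ?_).trans_lt hS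
    exact (mul_le_mul_right (measure_tail_le_setLIntegral hr (by linarith)) _).trans
      (le_iSup_of_le (⟨r, hr, hr1.le⟩ : Set.Ioc (0 : ℝ) 1) le_rfl)

theorem stmt_11 (η β : ℝ) (hη : η ∈ Set.Ico (0 : ℝ) 1) (hβ : β ∈ Set.Ioc (1 + η) 2)
    (ℓ : Measure ℝ)
    (hℓ0 : ℓ {(0 : ℝ)} = 0)
    (hℓlevy : ∫⁻ x, ENNReal.ofReal (min (x ^ 2) 1) ∂ℓ ≠ ⊤) :
    (⨆ r : Set.Ioo (0 : ℝ) 1,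
        ENNReal.ofReal (r.1 ^ β) * ℓ {x : ℝ | r.1 < |x| ∧ |x| ≤ 1}) < ⊤ ↔
    (⨆ r : Set.Ioc (0 : ℝ) 1,
        ENNReal.ofReal (r.1 ^ β) *
          ∫⁻ x in {x : ℝ | |x| ≤ 1},
            ENNReal.ofReal (min (|x / r.1| ^ 2) (|x / r.1| ^ (η + 1))) ∂ℓ) < ⊤ :=
  stmt_11_general η β hη hβ ℓ hℓlevy
end
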